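/- arXiv:1612.05915 — 8 statements merged into one kernel-verified Lean document; each statement's English description precedes it below -/
import Mathlib

section
/- Let A be a Banach algebra, let I be a closed left ideal in A, and let E be a dense subset of I. If I is finitely-generated as a left ideal, then I is finitely-generated by finitely many elements of E; that is, there exist n ∈ ℕ and y₁, …, yₙ ∈ E such that I = A♯y₁ + ⋯ + A♯yₙ. -/
open scoped BigOperators

variable {A : Type*}

/-- `I` is a left ideal of the (not necessarily unital) complex algebra `A`:
a linear subspace closed under left multiplication by arbitrary elements of `A`. -/
def IsLeftIdeal [NonUnitalRing A] [Module ℂ A] (I : Submodule ℂ A) : Prop :=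
  ∀ a : A, ∀ x ∈ I, a * x ∈ I

/-- The set `A♯x₁ + ⋯ + A♯xₙ`, where `A♯` is the (conditional) unitisation of `A`:
its elements are exactly the sums `∑ᵢ (aᵢ * xᵢ + cᵢ • xᵢ)` with `aᵢ ∈ A`, `cᵢ ∈ ℂ`.
No closure is taken. -/
def genSet [NonUnitalRing A] [Module ℂ A] {n : ℕ} (x : Fin n → A) : Set A :=
  {y | ∃ (a : Fin n → A) (c : Fin n → ℂ), y = ∑ i, (a i * x i + c i • x i)}

/-- A left ideal `I` of `A` is finitely generated if `I = A♯x₁ + ⋯ + A♯xₙ`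
for some `n ∈ ℕ` and `x₁, …, xₙ ∈ A`. -/
def IsFinGenLeftIdeal [NonUnitalRing A] [Module ℂ A] (I : Submodule ℂ A) : Prop :=
  ∃ (n : ℕ) (x : Fin n → A), (I : Set A) = genSet x

section Aux

variable [NonUnitalNormedRing A] [NormedSpace ℂ A] [IsScalarTower ℂ A A]
    [SMulCommClass ℂ A A]

/-- The continuous linear map `(a, c) ↦ a * x + c • x`. -/
noncomputable def phiCLM (x : A) : (A × ℂ) →L[ℂ] A :=
  ((ContinuousLinearMap.mul ℂ A).flip x).comp (ContinuousLinearMap.fst ℂ A ℂ)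
  + (ContinuousLinearMap.snd ℂ A ℂ).smulRight x

@[simp] lemma phiCLM_apply (x : A) (u : A × ℂ) : phiCLM x u = u.1 * x + u.2 • x := rfl

/-- The continuous linear map `u ↦ ∑ i, (u i).1 * x i + (u i).2 • x i`. -/
noncomputable def genCLM {n : ℕ} (x : Fin n → A) : (Fin n → A × ℂ) →L[ℂ] A :=
  ∑ i, (phiCLM (x i)).comp (ContinuousLinearMap.proj i)

lemma genCLM_apply {n : ℕ} (x : Fin n → A) (u : Fin n → A × ℂ) :
    genCLM x u = ∑ i, ((u i).1 * x i + (u i).2 • x i) := by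
  simp [genCLM, ContinuousLinearMap.sum_apply]

lemma range_genCLM {n : ℕ} (x : Fin n → A) : Set.range (genCLM x) = genSet x := by
  ext z
  constructor
  · rintro ⟨u, rfl⟩
    refine ⟨fun i => (u i).1, fun i => (u i).2, ?_⟩
    simpa using genCLM_apply x u
  · rintro ⟨a, c, rfl⟩
    exact ⟨fun i => (a i, c i), genCLM_apply x _⟩

lemma mem_genSet_self {n : ℕ} (x : Fin n → A) (i : Fin n) : x i ∈ genSet x := by
  refine ⟨0, Pi.single i 1, ?_⟩
  simp [Pi.single_apply]

lemma genSet_subset {n : ℕ} {I : Submodule ℂ A} (hI : IsLeftIdeal I) (x : Fin n → A)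
    (hx : ∀ i, x i ∈ I) : genSet x ⊆ (I : Set A) := by
  rintro z ⟨a, c, rfl⟩
  exact Submodule.sum_mem I fun i _ =>
    I.add_mem (hI (a i) (x i) (hx i)) (I.smul_mem (c i) (hx i))

end Aux

set_option maxHeartbeats 1000000 in
/-- Perturbation lemma: a continuous linear map close enough to a surjective one
(with a quantitative right inverse) is surjective. -/
lemma surj_of_close {E F : Type*} [NormedAddCommGroup E] [NormedSpace ℂ E] [CompleteSpace E]
    [NormedAddCommGroup F] [NormedSpace ℂ F] [CompleteSpace F]
    (T S : E →L[ℂ] F) (C : ℝ) (hC : 0 < C)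
    (hT : ∀ z : F, ∃ u, T u = z ∧ ‖u‖ ≤ C * ‖z‖)
    (hTS : ∀ u, ‖T u - S u‖ ≤ 1 / (2 * C) * ‖u‖) :
    Function.Surjective S := by
  choose g hg1 hg2 using hT
  intro z₀
  set z : ℕ → F := fun k => (fun w => w - S (g w))^[k] z₀ with hz
  have hzsucc : ∀ k, z (k + 1) = z k - S (g (z k)) := fun k =>
    Function.iterate_succ_apply' (fun w => w - S (g w)) k z₀
  have hznorm : ∀ k, ‖z k‖ ≤ (1 / 2) ^ k * ‖z₀‖ := by
    intro k
    induction k with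
    | zero => simp [hz]
    | succ k ih =>
      have h1 : z (k + 1) = T (g (z k)) - S (g (z k)) := by rw [hzsucc, hg1]
      calc ‖z (k + 1)‖ = ‖T (g (z k)) - S (g (z k))‖ := by rw [h1]
        _ ≤ 1 / (2 * C) * ‖g (z k)‖ := hTS _
        _ ≤ 1 / (2 * C) * (C * ‖z k‖) := by
            apply mul_le_mul_of_nonneg_left (hg2 _)
            positivity
        _ = 1 / 2 * ‖z k‖ := by field_simp
        _ ≤ 1 / 2 * ((1 / 2) ^ k * ‖z₀‖) := by
            apply mul_le_mul_of_nonneg_left ih; norm_num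
        _ = (1 / 2) ^ (k + 1) * ‖z₀‖ := by ring
  have hgs : Summable fun k => g (z k) := by
    apply Summable.of_norm
    have hb : Summable fun k : ℕ => (C * ‖z₀‖) * (1 / 2) ^ k :=
      summable_geometric_two.mul_left _
    refine Summable.of_nonneg_of_le (fun k => norm_nonneg _) (fun k => ?_) hb
    calc ‖g (z k)‖ ≤ C * ‖z k‖ := hg2 _
      _ ≤ C * ((1 / 2) ^ k * ‖z₀‖) := by
          apply mul_le_mul_of_nonneg_left (hznorm k) hC.le
      _ = (C * ‖z₀‖) * (1 / 2) ^ k := by ring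
  have hz0 : Filter.Tendsto z Filter.atTop (nhds 0) := by
    rw [tendsto_zero_iff_norm_tendsto_zero]
    have hb : Filter.Tendsto (fun k : ℕ => (1 / 2 : ℝ) ^ k * ‖z₀‖) Filter.atTop (nhds 0) := by
      have := (tendsto_pow_atTop_nhds_zero_of_lt_one (by norm_num : (0:ℝ) ≤ 1/2)
        (by norm_num : (1/2:ℝ) < 1)).mul_const ‖z₀‖
      simpa using this
    exact squeeze_zero (fun k => norm_nonneg _) hznorm hb
  have hSgs : Summable fun k => S (g (z k)) :=
    hgs.map (S : E →+ F) S.continuous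
  have hsum : HasSum (fun k => S (g (z k))) z₀ := by
    rw [hSgs.hasSum_iff_tendsto_nat]
    have hps : ∀ m : ℕ, ∑ k ∈ Finset.range m, S (g (z k)) = z₀ - z m := by
      intro m
      have : ∀ k, S (g (z k)) = z k - z (k + 1) := by
        intro k; rw [hzsucc]; abel
      simp only [this]
      rw [Finset.sum_range_sub' z]
      rfl
    simp only [hps]
    simpa using (Filter.Tendsto.const_sub z₀ hz0)
  refine ⟨∑' k, g (z k), ?_⟩
  rw [S.map_tsum hgs, hsum.tsum_eq]

set_option maxHeartbeats 1000000 in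
/-- Lemma 2.1: if `I` is a closed left ideal of a Banach algebra `A`, `E ⊆ I` is dense
in `I`, and `I` is finitely generated, then `I` is finitely generated by elements of `E`. -/
theorem stmt0 [NonUnitalNormedRing A] [NormedSpace ℂ A] [IsScalarTower ℂ A A]
    [SMulCommClass ℂ A A] [CompleteSpace A]
    (I : Submodule ℂ A) (hI : IsLeftIdeal I) (hIclosed : IsClosed (I : Set A))
    (E : Set A) (hEI : E ⊆ I) (hEdense : (I : Set A) ⊆ closure E)
    (hfg : IsFinGenLeftIdeal I) :
    ∃ (n : ℕ) (y : Fin n → A), (∀ i, y i ∈ E) ∧ (I : Set A) = genSet y := by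
  obtain ⟨n, x, hx⟩ := hfg
  haveI : CompleteSpace I := hIclosed.completeSpace_coe
  have hxI : ∀ i, x i ∈ I := by
    intro i
    rw [← SetLike.mem_coe, hx]
    exact mem_genSet_self x i
  -- corestrict `genCLM x` to `I`
  have hTmem : ∀ u, genCLM x u ∈ I := by
    intro u
    rw [← SetLike.mem_coe, hx]
    exact (range_genCLM x) ▸ Set.mem_range_self u
  set T : (Fin n → A × ℂ) →L[ℂ] I := (genCLM x).codRestrict I hTmem with hT
  have hTsurj : Function.Surjective T := by
    rintro ⟨w, hw⟩
    rw [← SetLike.mem_coe, hx, ← range_genCLM x] at hw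
    obtain ⟨u, hu⟩ := hw
    exact ⟨u, Subtype.ext hu⟩
  obtain ⟨C, hC, hCbound⟩ := T.exists_preimage_norm_le hTsurj
  -- choose generators in `E` close to `x`
  set ε : ℝ := 1 / (2 * C * (2 * n + 1)) with hε
  have hεpos : 0 < ε := by positivity
  have hy : ∀ i, ∃ y ∈ E, ‖x i - y‖ < ε := by
    intro i
    have : x i ∈ closure E := hEdense (hxI i)
    obtain ⟨y, hyE, hyd⟩ := Metric.mem_closure_iff.1 this ε hεpos
    exact ⟨y, hyE, by rwa [← dist_eq_norm]⟩
  choose y hyE hyclose using hy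
  have hyI : ∀ i, y i ∈ I := fun i => hEI (hyE i)
  have hSmem : ∀ u, genCLM y u ∈ I := by
    intro u
    have := genSet_subset hI y hyI ((range_genCLM y) ▸ Set.mem_range_self u)
    exact this
  set S : (Fin n → A × ℂ) →L[ℂ] I := (genCLM y).codRestrict I hSmem with hS
  -- norm estimate
  have hTS : ∀ u, ‖T u - S u‖ ≤ 1 / (2 * C) * ‖u‖ := by
    intro u
    have h1 : ‖T u - S u‖ = ‖genCLM x u - genCLM y u‖ := rfl
    rw [h1, genCLM_apply, genCLM_apply, ← Finset.sum_sub_distrib]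
    have h2 : ∀ i : Fin n, ‖((u i).1 * x i + (u i).2 • x i) - ((u i).1 * y i + (u i).2 • y i)‖
        ≤ 2 * ε * ‖u‖ := by
      intro i
      have hxy : ((u i).1 * x i + (u i).2 • x i) - ((u i).1 * y i + (u i).2 • y i)
          = (u i).1 * (x i - y i) + (u i).2 • (x i - y i) := by
        rw [mul_sub, smul_sub]; abel
      rw [hxy]
      have ha : ‖(u i).1‖ ≤ ‖u‖ := (norm_fst_le (u i)).trans (norm_le_pi_norm u i)
      have hc : ‖(u i).2‖ ≤ ‖u‖ := (norm_snd_le (u i)).trans (norm_le_pi_norm u i)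
      calc ‖(u i).1 * (x i - y i) + (u i).2 • (x i - y i)‖
          ≤ ‖(u i).1 * (x i - y i)‖ + ‖(u i).2 • (x i - y i)‖ := norm_add_le _ _
        _ ≤ ‖(u i).1‖ * ‖x i - y i‖ + ‖(u i).2‖ * ‖x i - y i‖ := by
            gcongr
            · exact norm_mul_le _ _
            · rw [norm_smul]
        _ ≤ ‖u‖ * ε + ‖u‖ * ε := by
            gcongr <;> first | exact (hyclose i).le | exact norm_nonneg _
        _ = 2 * ε * ‖u‖ := by ring
    calc ‖∑ i, (((u i).1 * x i + (u i).2 • x i) - ((u i).1 * y i + (u i).2 • y i))‖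
        ≤ ∑ i : Fin n, 2 * ε * ‖u‖ := norm_sum_le_of_le _ (fun i _ => h2 i)
      _ = n * (2 * ε * ‖u‖) := by simp [Finset.sum_const, mul_comm]
      _ ≤ 1 / (2 * C) * ‖u‖ := by
          rw [hε]
          rw [show (n : ℝ) * (2 * (1 / (2 * C * (2 * n + 1))) * ‖u‖)
              = (2 * n) / (2 * C * (2 * n + 1)) * ‖u‖ by ring]
          apply mul_le_mul_of_nonneg_right _ (norm_nonneg u)
          rw [div_le_div_iff₀ (by positivity) (by positivity)]
          have hn : (0:ℝ) ≤ n := Nat.cast_nonneg n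
          nlinarith [hC]
  have hSsurj : Function.Surjective S :=
    surj_of_close T S C hC (fun z => hCbound z) hTS
  refine ⟨n, y, hyE, ?_⟩
  apply Set.Subset.antisymm
  · intro w hw
    obtain ⟨u, hu⟩ := hSsurj ⟨w, hw⟩
    have : genCLM y u = w := congrArg Subtype.val hu
    exact (range_genCLM y) ▸ ⟨u, this⟩
  · exact genSet_subset hI y hyI
end

section
/- Let X be a Banach space, let E be a dense linear subspace of X, and let Y be a closed linear subspace of X of codimension one. Then E ∩ Y is dense in Y. -/
/-- Lemma 2.2: if `X` is a Banach space, `E` a dense linear subspace of `X`, and `Y` a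
closed linear subspace of `X` of codimension one, then `E ∩ Y` is dense in `Y`. -/
theorem stmt1 {X : Type*} [NormedAddCommGroup X] [NormedSpace ℂ X] [CompleteSpace X]
    (E Y : Submodule ℂ X) (hE : Dense (E : Set X)) (hY : IsClosed (Y : Set X))
    (hcodim : Module.finrank ℂ (X ⧸ Y) = 1) :
    closure ((E : Set X) ∩ (Y : Set X)) = (Y : Set X) := by
  haveI : IsClosed (Y : Set X) := hY
  haveI : FiniteDimensional ℂ (X ⧸ Y) := FiniteDimensional.of_finrank_eq_succ hcodim
  -- get a linear equiv (X ⧸ Y) ≃ₗ[ℂ] ℂ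
  obtain ⟨g⟩ : Nonempty ((X ⧸ Y) ≃ₗ[ℂ] ℂ) := by
    exact FiniteDimensional.nonempty_linearEquiv_of_finrank_eq (by simp [hcodim])
  have hgcont : Continuous g := g.toLinearMap.continuous_of_finiteDimensional
  set f : X →ₗ[ℂ] ℂ := g.toLinearMap ∘ₗ Y.mkQ with hf
  have hfcont : Continuous f := hgcont.comp continuous_quot_mk
  have hker : ∀ x : X, f x = 0 ↔ x ∈ Y := by
    intro x
    rw [hf]
    simp only [LinearMap.comp_apply, LinearEquiv.coe_coe, LinearEquiv.map_eq_zero_iff,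
      Submodule.mkQ_apply]
    exact Submodule.Quotient.mk_eq_zero Y
  -- find e ∈ E with f e ≠ 0
  obtain ⟨e, heE, hfe⟩ : ∃ e ∈ E, f e ≠ 0 := by
    by_contra h
    push_neg at h
    have hEY : (E : Set X) ⊆ (Y : Set X) := fun x hx => (hker x).mp (h x hx)
    have : (Y : Set X) = Set.univ := by
      apply Set.eq_univ_of_univ_subset
      rw [← hE.closure_eq]
      calc closure (E : Set X) ⊆ closure (Y : Set X) := closure_mono hEY
        _ = Y := hY.closure_eq
    have hYtop : Y = ⊤ := by
      ext x
      simp only [Submodule.mem_top, iff_true]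
      have hx : x ∈ (Y : Set X) := by rw [this]; trivial
      exact hx
    rw [hYtop] at hcodim
    have : Subsingleton (X ⧸ (⊤ : Submodule ℂ X)) := QuotientAddGroup.subsingleton_quotient_top
    simp [Module.finrank_zero_of_subsingleton] at hcodim
  apply subset_antisymm
  · calc closure ((E : Set X) ∩ (Y : Set X)) ⊆ closure (Y : Set X) :=
        closure_mono Set.inter_subset_right
      _ = Y := hY.closure_eq
  · intro y hy
    -- T x = x - (f x / f e) • e maps E into E ∩ Y and fixes y
    have hT : Continuous fun x : X => x - (f x / f e) • e :=
      continuous_id.sub ((hfcont.div_const _).smul continuous_const)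
    have hmaps : Set.MapsTo (fun x : X => x - (f x / f e) • e) (E : Set X)
        ((E : Set X) ∩ (Y : Set X)) := by
      intro x hx
      constructor
      · exact E.sub_mem hx (E.smul_mem _ heE)
      · apply (hker _).mp
        simp [div_mul_cancel₀ _ hfe]
    have hyc : y ∈ closure (E : Set X) := by rw [hE.closure_eq]; trivial
    have := map_mem_closure hT hyc hmaps
    simpa [(hker y).mpr hy] using this
end

section
/- Let A be a Banach algebra, let B be a dense left ideal in A, and let I be a closed maximal left ideal of A. Then B ∩ I is dense in I. -/
variable {A : Type*}

/-- Lemma 2.3: if `B` is a dense left ideal of a Banach algebra `A` and `I` is a closed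
maximal left ideal of `A`, then `B ∩ I` is dense in `I`. -/
theorem stmt2 [NonUnitalNormedRing A] [NormedSpace ℂ A] [IsScalarTower ℂ A A]
    [SMulCommClass ℂ A A] [CompleteSpace A]
    (B : Submodule ℂ A) (hB : IsLeftIdeal B) (hBdense : Dense (B : Set A))
    (I : Submodule ℂ A) (hI : IsLeftIdeal I) (hIclosed : IsClosed (I : Set A))
    (hIproper : I ≠ ⊤)
    (hImax : ∀ J : Submodule ℂ A, IsLeftIdeal J → I ≤ J → J = I ∨ J = ⊤) :
    closure ((B : Set A) ∩ (I : Set A)) = (I : Set A) := by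
  -- there is some y ∈ B with y ∉ I
  obtain ⟨y, hyB, hyI⟩ : ∃ y, y ∈ B ∧ y ∉ I := by
    by_contra h
    push_neg at h
    have hsub : (B : Set A) ⊆ (I : Set A) := fun z hz => h z hz
    have := closure_mono hsub
    rw [hBdense.closure_eq, hIclosed.closure_eq] at this
    exact hIproper (Submodule.eq_top_iff'.mpr fun x => this (Set.mem_univ x))
  -- the left ideal generated by I and y is everything
  set L : Submodule ℂ A := LinearMap.range (LinearMap.mulRight ℂ y) with hL
  set J : Submodule ℂ A := I ⊔ L ⊔ Submodule.span ℂ {y} with hJdef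
  have hIJ : I ≤ J := le_sup_of_le_left le_sup_left
  have hLJ : L ≤ J := le_sup_of_le_left le_sup_right
  have hJideal : IsLeftIdeal J := by
    intro a x hx
    have : J ≤ Submodule.comap (LinearMap.mulLeft ℂ a) J := by
      refine sup_le (sup_le ?_ ?_) ?_
      · intro z hz
        exact hIJ (hI a z hz)
      · rintro z ⟨b, rfl⟩
        refine hLJ ⟨a * b, ?_⟩
        simp [LinearMap.mulRight_apply, mul_assoc]
      · rw [Submodule.span_le]
        rintro z rfl
        exact hLJ ⟨a, rfl⟩
    exact this hx
  have hJtop : J = ⊤ := by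
    rcases hImax J hJideal hIJ with h | h
    · exfalso
      apply hyI
      rw [← h]
      exact Submodule.mem_sup_right (Submodule.mem_span_singleton_self y)
    · exact h
  -- the continuous linear map (i, a, c) ↦ i + a * y + c • y is surjective
  haveI : CompleteSpace I := hIclosed.completeSpace_coe
  set Φ : (I × (A × ℂ)) →L[ℂ] A :=
    (I.subtypeL).coprod
      (((ContinuousLinearMap.mul ℂ A).flip y).coprod
        (ContinuousLinearMap.toSpanSingleton ℂ y)) with hΦ
  have hΦapply : ∀ p : I × (A × ℂ), Φ p = (p.1 : A) + (p.2.1 * y + p.2.2 • y) := by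
    intro p
    simp [hΦ, ContinuousLinearMap.toSpanSingleton_apply]
  have hΦsurj : Function.Surjective Φ := by
    intro z
    have hz : z ∈ J := hJtop ▸ Submodule.mem_top
    rw [hJdef] at hz
    obtain ⟨u, hu, v, hv, rfl⟩ := Submodule.mem_sup.mp hz
    obtain ⟨i, hi, w, hw, rfl⟩ := Submodule.mem_sup.mp hu
    obtain ⟨a, rfl⟩ := hw
    obtain ⟨c, rfl⟩ := Submodule.mem_span_singleton.mp hv
    refine ⟨(⟨i, hi⟩, a, c), ?_⟩
    rw [hΦapply]
    simp [LinearMap.mulRight_apply, add_assoc]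
  obtain ⟨C, hCpos, hC⟩ := Φ.exists_preimage_norm_le hΦsurj
  -- density
  apply Set.Subset.antisymm
  · exact closure_minimal Set.inter_subset_right hIclosed
  · intro x hx
    rw [Metric.mem_closure_iff]
    intro ε hε
    obtain ⟨b, hbB, hbx⟩ := hBdense.exists_dist_lt x (div_pos hε hCpos)
    obtain ⟨p, hp, hpnorm⟩ := hC (b - x)
    rw [hΦapply] at hp
    set i : A := (p.1 : A)
    have hkey : x + i = b - (p.2.1 * y + p.2.2 • y) := by
      rw [eq_sub_iff_add_eq, add_assoc, hp]
      abel
    refine ⟨x + i, ⟨?_, ?_⟩, ?_⟩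
    · rw [hkey]
      exact B.sub_mem hbB (B.add_mem (hB p.2.1 y hyB) (B.smul_mem _ hyB))
    · exact I.add_mem hx p.1.2
    · have h1 : dist x (x + i) = ‖i‖ := by
        rw [dist_eq_norm]
        simp
      have h2 : ‖i‖ ≤ ‖p‖ := le_trans (norm_fst_le p) le_rfl
      have h3 : ‖b - x‖ = dist x b := by rw [dist_eq_norm, norm_sub_rev]
      have h4 : ‖p‖ ≤ C * dist x b := by rw [← h3]; exact hpnorm
      have : dist x (x + i) ≤ C * dist x b := by
        rw [h1]; exact le_trans h2 h4
      calc dist x (x + i) ≤ C * dist x b := this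
        _ < C * (ε / C) := by exact mul_lt_mul_of_pos_left hbx hCpos
        _ = ε := by field_simp
end

section
/- Let G be a locally compact group with left Haar measure m. Suppose that, for every precompact subset A of G, the indicator function χ_A is equal m-almost everywhere to a continuous function on G. Then G is discrete. -/
open MeasureTheory

/-- Lemma 3.2: let `G` be a locally compact group with left Haar measure `μ`.  If for
every precompact subset `A` of `G` the indicator function `χ_A` is equal `μ`-almost
everywhere to a continuous function, then `G` is discrete. -/
theorem stmt4 {G : Type*} [Group G] [TopologicalSpace G] [IsTopologicalGroup G]
    [T2Space G] [LocallyCompactSpace G] [MeasurableSpace G] [BorelSpace G]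
    (μ : Measure G) [μ.IsHaarMeasure]
    (h : ∀ A : Set G, IsCompact (closure A) →
      ∃ f : G → ℝ, Continuous f ∧ A.indicator (fun _ => (1 : ℝ)) =ᵐ[μ] f) :
    DiscreteTopology G := by
  by_contra hD
  -- the singleton {1} is not open
  have hsing : ¬ IsOpen ({(1 : G)} : Set G) := by
    intro h1
    apply hD
    rw [discreteTopology_iff_isOpen_singleton]
    intro a
    have : IsOpen ((Homeomorph.mulLeft a) '' {1}) := (Homeomorph.mulLeft a).isOpen_image.2 h1
    simpa using this
  -- an open subset of a null set is empty
  have hopen_empty : ∀ {N s : Set G}, μ N = 0 → IsOpen s → s ⊆ N → s = ∅ := by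
    intro N s hN hs hsub
    by_contra hne
    exact (hs.measure_pos μ (Set.nonempty_iff_ne_empty.2 hne)).ne' (measure_mono_null hsub hN)
  obtain ⟨Q, hQc, hQn⟩ := exists_compact_mem_nhds (1 : G)
  obtain ⟨f, hfc, hfe⟩ := h Q (by rw [hQc.isClosed.closure_eq]; exact hQc)
  set bad : Set G := {y | ¬ (Q.indicator (fun _ => (1:ℝ)) y = f y)} with hbad_def
  have hN : μ bad = 0 := ae_iff.1 hfe
  -- f takes values in {0, 1}
  have hval : ∀ y, f y = 0 ∨ f y = 1 := by
    intro y
    by_contra hy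
    push_neg at hy
    have hsub : f ⁻¹' ({0, 1} : Set ℝ)ᶜ ⊆ bad := by
      intro z hz
      simp only [Set.mem_preimage, Set.mem_compl_iff, Set.mem_insert_iff,
        Set.mem_singleton_iff] at hz
      push_neg at hz
      intro hzz
      by_cases hzQ : z ∈ Q
      · rw [Set.indicator_of_mem hzQ] at hzz; exact hz.2 hzz.symm
      · rw [Set.indicator_of_notMem hzQ] at hzz; exact hz.1 hzz.symm
    have hopen : IsOpen (f ⁻¹' ({0, 1} : Set ℝ)ᶜ) :=
      ((((Set.finite_singleton (1:ℝ)).insert 0)).isClosed.isOpen_compl).preimage hfc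
    have hemp := hopen_empty hN hopen hsub
    have hy' : y ∈ f ⁻¹' ({0, 1} : Set ℝ)ᶜ := by
      simp only [Set.mem_preimage, Set.mem_compl_iff, Set.mem_insert_iff, Set.mem_singleton_iff]
      push_neg
      exact hy
    rw [hemp] at hy'
    exact hy'
  -- f = 1 on open subsets of Q
  have hone : ∀ {s : Set G}, IsOpen s → s ⊆ Q → ∀ y ∈ s, f y = 1 := by
    intro s hs hsQ y hy
    by_contra hne
    have hsub : s ∩ f ⁻¹' ({(1:ℝ)}ᶜ) ⊆ bad := by
      rintro z ⟨hz1, hz2⟩ hzz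
      rw [Set.indicator_of_mem (hsQ hz1)] at hzz
      exact hz2 hzz.symm
    have hemp := hopen_empty hN (hs.inter ((isClosed_singleton.isOpen_compl).preimage hfc)) hsub
    have : y ∈ s ∩ f ⁻¹' ({(1:ℝ)}ᶜ) := ⟨hy, hne⟩
    rw [hemp] at this
    exact this
  -- f = 0 outside Q
  have hzero : ∀ y, y ∉ Q → f y = 0 := by
    intro y hy
    by_contra hne
    have hsub : Qᶜ ∩ f ⁻¹' ({(0:ℝ)}ᶜ) ⊆ bad := by
      rintro z ⟨hz1, hz2⟩ hzz
      rw [Set.indicator_of_notMem hz1] at hzz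
      exact hz2 hzz.symm
    have hemp := hopen_empty hN
      ((hQc.isClosed.isOpen_compl).inter ((isClosed_singleton.isOpen_compl).preimage hfc)) hsub
    have : y ∈ Qᶜ ∩ f ⁻¹' ({(0:ℝ)}ᶜ) := ⟨hy, hne⟩
    rw [hemp] at this
    exact this
  set U : Set G := f ⁻¹' {1} with hU_def
  have hUopen : IsOpen U := by
    have : U = f ⁻¹' (Set.Ioi (1/2 : ℝ)) := by
      ext z
      simp only [hU_def, Set.mem_preimage, Set.mem_singleton_iff, Set.mem_Ioi]
      constructor
      · intro hz; rw [hz]; norm_num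
      · intro hz
        rcases hval z with h0 | h1
        · rw [h0] at hz; norm_num at hz
        · exact h1
    rw [this]
    exact isOpen_Ioi.preimage hfc
  have hUclosed : IsClosed U := isClosed_singleton.preimage hfc
  have hUQ : U ⊆ Q := by
    intro z hz
    by_contra hzQ
    have h0 := hzero z hzQ
    have h1 : f z = 1 := hz
    rw [h0] at h1
    norm_num at h1
  have h1U : (1 : G) ∈ U := by
    have h1i : (1 : G) ∈ interior Q := mem_interior_iff_mem_nhds.2 hQn
    exact hone isOpen_interior interior_subset 1 h1i
  have hUcomp : IsCompact U := hQc.of_isClosed_subset hUclosed hUQ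
  obtain ⟨V, hV1, hVU⟩ := compact_open_separated_mul_left hUcomp hUopen (subset_refl U)
  set W : Set G := V ∩ V⁻¹ with hW_def
  have hW1 : W ∈ nhds (1 : G) := Filter.inter_mem hV1 (inv_mem_nhds_one G hV1)
  set H : Subgroup G := Subgroup.closure W with hH_def
  have hHopen : IsOpen (H : Set G) :=
    Subgroup.isOpen_of_mem_nhds H (Filter.mem_of_superset hW1 Subgroup.subset_closure)
  -- every element of H maps U into U by left multiplication
  have hmul : ∀ g ∈ H, (∀ u ∈ U, g * u ∈ U) ∧ (∀ u ∈ U, g⁻¹ * u ∈ U) := by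
    intro g hg
    induction hg using Subgroup.closure_induction with
    | mem w hw =>
      constructor
      · intro u hu
        exact hVU (Set.mul_mem_mul hw.1 hu)
      · intro u hu
        have hw2 : w⁻¹ ∈ V := hw.2
        exact hVU (Set.mul_mem_mul hw2 hu)
    | one =>
      constructor <;> intro u hu <;> simpa using hu
    | mul x y hx hy ihx ihy =>
      constructor
      · intro u hu
        rw [mul_assoc]
        exact ihx.1 _ (ihy.1 u hu)
      · intro u hu
        rw [mul_inv_rev, mul_assoc]
        exact ihy.2 _ (ihx.2 u hu)
    | inv x hx ihx =>
      exact ⟨fun u hu => by simpa using ihx.2 u hu, fun u hu => by simpa using ihx.1 u hu⟩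
  have hHU : (H : Set G) ⊆ U := by
    intro g hg
    simpa using (hmul g hg).1 1 h1U
  have hHclosed : IsClosed (H : Set G) := H.isClosed_of_isOpen hHopen
  have hHcomp : IsCompact (H : Set G) := hUcomp.of_isClosed_subset hHclosed hHU
  -- H is infinite
  have hHinf : (H : Set G).Infinite := by
    by_contra hfin
    rw [Set.not_infinite] at hfin
    have hdiff : IsOpen ((H : Set G) \ ((H : Set G) \ {1})) :=
      hHopen.sdiff (hfin.subset Set.diff_subset).isClosed
    have heq : ((H : Set G) \ ((H : Set G) \ {1})) = {1} := by
      ext x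
      simp only [Set.mem_diff, Set.mem_singleton_iff]
      constructor
      · rintro ⟨hx, hx2⟩
        by_contra hne
        exact hx2 ⟨hx, hne⟩
      · rintro rfl
        exact ⟨H.one_mem, fun hh => hh.2 rfl⟩
    rw [heq] at hdiff
    exact hsing hdiff
  -- every subset of H is null measurable
  have hnull : ∀ s : Set G, s ⊆ (H : Set G) → NullMeasurableSet s μ := by
    intro s hsH
    have hcl : IsCompact (closure s) :=
      hHcomp.of_isClosed_subset isClosed_closure (closure_minimal hsH hHclosed)
    obtain ⟨g, hgc, hge⟩ := h s hcl
    refine ⟨g ⁻¹' {1}, (isClosed_singleton.preimage hgc).measurableSet, ?_⟩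
    rw [Filter.eventuallyEq_set]
    filter_upwards [hge] with y hy
    constructor
    · intro hys
      rw [Set.indicator_of_mem hys] at hy
      exact hy.symm
    · intro hy1
      by_contra hys
      rw [Set.indicator_of_notMem hys] at hy
      have hgy1 : g y = 1 := hy1
      rw [← hy] at hgy1
      norm_num at hgy1
  -- a countably infinite subgroup D of H
  obtain e := Set.Infinite.natEmbedding _ hHinf
  set g0 : ℕ → G := fun n => ((e n : G)) with hg0_def
  have hg0inj : Function.Injective g0 := by
    intro a b hab
    exact e.injective (Subtype.ext hab)
  have hg0H : ∀ n, g0 n ∈ (H : Set G) := fun n => (e n).2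
  set D : Subgroup G := Subgroup.closure (Set.range g0) with hD_def
  have hDle : D ≤ H := (Subgroup.closure_le H).2 (by rintro _ ⟨n, rfl⟩; exact hg0H n)
  haveI hDcount : Countable ↥D := by
    haveI : Countable (FreeGroup ℕ) := FreeGroup.toWord_injective.countable
    have hrange : D = (FreeGroup.lift g0).range := (FreeGroup.range_lift_eq_closure).symm
    have hcnt : (D : Set G).Countable := by
      rw [hrange]
      exact Set.countable_range _
    exact hcnt.to_subtype
  haveI hDinf : Infinite ↥D :=
    (((Set.infinite_range_of_injective hg0inj).mono Subgroup.subset_closure)).to_subtype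
  -- the Vitali transversal
  set rel : G → G → Prop := fun x y => x * y⁻¹ ∈ D with hrel_def
  have hrefl : ∀ x, rel x x := fun x => by simp [hrel_def, D.one_mem]
  have hsymm : ∀ {x y}, rel x y → rel y x := by
    intro x y hxy
    have := D.inv_mem hxy
    simpa [hrel_def] using this
  have htrans : ∀ {x y z}, rel x y → rel y z → rel x z := by
    intro x y z hxy hyz
    have := D.mul_mem hxy hyz
    simpa [hrel_def, mul_assoc] using this
  set st : Setoid G := ⟨rel, ⟨hrefl, hsymm, htrans⟩⟩ with hst_def
  set rep : G → G := fun x => (Quotient.mk st x).out with hrep_def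
  have hrep_rel : ∀ x, rel (rep x) x := by
    intro x
    exact Quotient.exact (Quotient.out_eq (Quotient.mk st x))
  have hrep_eq : ∀ x y, rel x y → rep x = rep y := by
    intro x y hxy
    simp only [hrep_def]
    rw [Quotient.sound (hxy : st.r x y)]
  set T : Set G := rep '' (H : Set G) with hT_def
  have hTH : T ⊆ (H : Set G) := by
    rintro _ ⟨x, hx, rfl⟩
    have hd : rep x * x⁻¹ ∈ H := hDle (hrep_rel x)
    have : rep x = (rep x * x⁻¹) * x := by group
    rw [this]
    exact H.mul_mem hd hx
  -- translates of T by D cover H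
  have hcover : (⋃ d : ↥D, (fun x => (d : G) * x) '' T) = (H : Set G) := by
    apply Set.Subset.antisymm
    · intro y hy
      rw [Set.mem_iUnion] at hy
      obtain ⟨d, x, hx, rfl⟩ := hy
      exact H.mul_mem (hDle d.2) (hTH hx)
    · intro x hx
      have hr := hrep_rel x
      rw [Set.mem_iUnion]
      refine ⟨⟨(rep x * x⁻¹)⁻¹, D.inv_mem hr⟩, rep x, ⟨x, hx, rfl⟩, ?_⟩
      group
  -- the translates are pairwise disjoint
  have hdisj : Pairwise (Function.onFun Disjoint (fun d : ↥D => (fun x => (d : G) * x) '' T)) := by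
    intro d1 d2 hne
    rw [Function.onFun, Set.disjoint_left]
    rintro y ⟨x1, hx1, rfl⟩ ⟨x2, hx2, heq⟩
    obtain ⟨a1, _, rfl⟩ := hx1
    obtain ⟨a2, _, rfl⟩ := hx2
    have heq' : (d2 : G) * rep a2 = (d1 : G) * rep a1 := heq
    have h3 : rep a1 = (d1 : G)⁻¹ * ((d2 : G) * rep a2) := by rw [heq']; group
    have h4 : rep a1 * (rep a2)⁻¹ = (d1 : G)⁻¹ * (d2 : G) := by rw [h3]; group
    have hrel12 : rel (rep a1) (rep a2) := by
      show rep a1 * (rep a2)⁻¹ ∈ D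
      rw [h4]
      exact D.mul_mem (D.inv_mem d1.2) d2.2
    have hidem : ∀ x, rep (rep x) = rep x := fun x => hrep_eq _ _ (hrep_rel x)
    have hreq : rep a1 = rep a2 := by
      have := hrep_eq _ _ hrel12
      rwa [hidem, hidem] at this
    rw [hreq] at heq
    have : (d2 : G) = (d1 : G) := mul_right_cancel heq
    exact hne (Subtype.ext this.symm)
  -- each translate has the same measure as T
  have hUd_meas : ∀ d : ↥D, μ ((fun x => (d : G) * x) '' T) = μ T := by
    intro d
    have himg : (fun x => (d : G) * x) '' T = (fun x => (d : G)⁻¹ * x) ⁻¹' T := by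
      ext y
      simp only [Set.mem_image, Set.mem_preimage]
      constructor
      · rintro ⟨x, hx, rfl⟩
        simpa [inv_mul_cancel_left] using hx
      · intro hy
        exact ⟨(d : G)⁻¹ * y, hy, by simp [mul_inv_cancel_left]⟩
    rw [himg, measure_preimage_mul]
  -- the contradiction
  have hsum : μ (H : Set G) = ∑' _ : ↥D, μ T := by
    rw [← hcover, measure_iUnion₀ (fun d1 d2 hne => (hdisj hne).aedisjoint)
      (fun d => hnull _ (by
        rintro _ ⟨x, hx, rfl⟩
        exact H.mul_mem (hDle d.2) (hTH hx)))]
    exact tsum_congr hUd_meas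
  rcases eq_or_ne (μ T) 0 with hT | hT
  · rw [hT, tsum_zero] at hsum
    exact (hHopen.measure_pos μ ⟨1, H.one_mem⟩).ne' hsum
  · rw [ENNReal.tsum_const_eq_top_of_ne_zero hT] at hsum
    exact (hHcomp.measure_lt_top).ne hsum
end

section
/- Let M be a monoid. Then the augmentation ideal ℓ¹₀(M) is finitely-generated as a left ideal of ℓ¹(M) if and only if M is pseudo-finite. -/
set_option maxHeartbeats 1600000
set_option linter.unusedSectionVars false
set_option linter.unusedVariables false


noncomputable section

open scoped BigOperators

variable {M : Type*}

/-- Convolution of two functions on a (discrete) monoid: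
`(f ∗ g)(u) = ∑_{st = u} f(s) g(t)`. -/
def conv [Mul M] (f g : M → ℂ) : M → ℂ :=
  fun u => ∑' p : {p : M × M // p.1 * p.2 = u}, f (p : M × M).1 * g (p : M × M).2

/-- The space `ℓ¹(M)` of absolutely summable functions, as a set of functions `M → ℂ`. -/
def l1 : Set (M → ℂ) := {f | Summable fun u => ‖f u‖}

/-- The augmentation ideal `ℓ¹₀(M) = {f ∈ ℓ¹(M) : ∑_u f(u) = 0}`. -/
def l10 : Set (M → ℂ) := {f ∈ l1 | ∑' u, f u = 0}

/-- `I` is finitely generated as a left ideal of `ℓ¹(M)`: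
`I = A♯x₁ + ⋯ + A♯xₙ` for some `x₁, …, xₙ ∈ A = ℓ¹(M)`, where `A♯` is the
(conditional) unitisation, so `A♯x = {a ∗ x + c x : a ∈ A, c ∈ ℂ}`;
no closure is taken. -/
def IsFinGenLeftIdealOf [Mul M] (I : Set (M → ℂ)) : Prop :=
  ∃ (n : ℕ) (x : Fin n → (M → ℂ)), (∀ i, x i ∈ l1) ∧
    I = {f | ∃ (a : Fin n → (M → ℂ)) (c : Fin n → ℂ), (∀ i, a i ∈ l1) ∧
          f = ∑ i, (conv (a i) (x i) + c i • x i)}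

/-- `z 1, …, z n` is an ancestry of length `n` for `u` with respect to `X`:
`z 1 = u`, `z n = e`, and for `1 < i ≤ n` there is `x ∈ X` with `zᵢ x = zᵢ₋₁`
or `zᵢ = zᵢ₋₁ x`. -/
def IsAncestry [Monoid M] (X : Set M) (u : M) (z : ℕ → M) (n : ℕ) : Prop :=
  1 ≤ n ∧ z 1 = u ∧ z n = 1 ∧
    ∀ i, 1 < i → i ≤ n → ∃ x ∈ X, z i * x = z (i - 1) ∨ z i = z (i - 1) * x

/-- A monoid `M` is pseudo-finite if there are a finite subset `X ⊆ M` and `N ∈ ℕ` such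
that every element of `M` has an ancestry with respect to `X` of length at most `N`. -/
def PseudoFinite (M : Type*) [Monoid M] : Prop :=
  ∃ (X : Finset M) (N : ℕ), ∀ u : M,
    ∃ (n : ℕ) (z : ℕ → M), n ≤ N ∧ IsAncestry (X : Set M) u z n

namespace Stmt9
open scoped Classical
variable [Monoid M]


variable [Monoid M]

def sfe : ((y : M) × {x : M × M // x.1 * x.2 = y}) ≃ M × M :=
  Equiv.sigmaFiberEquiv (fun p : M × M => p.1 * p.2)

lemma summable_mul_norm {f g : M → ℂ} (hf : f ∈ l1) (hg : g ∈ l1) :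
    Summable fun p : M × M => ‖f p.1 * g p.2‖ := Summable.mul_norm hf hg

lemma summable_fiber {F : M × M → ℂ} (hF : Summable F) (u : M) :
    Summable fun p : {p : M × M // p.1 * p.2 = u} => F p :=
  (hF.subtype {p : M × M | p.1 * p.2 = u})

lemma summable_sfe_norm {F : M × M → ℂ} (hF : Summable fun p => ‖F p‖) :
    Summable fun c : (y : M) × {x : M × M // x.1 * x.2 = y} => ‖F (sfe c)‖ :=
  (sfe (M := M)).summable_iff.2 hF

lemma summable_fiber_tsum_norm {F : M × M → ℂ} (hF : Summable fun p => ‖F p‖) :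
    Summable fun u : M => ∑' p : {p : M × M // p.1 * p.2 = u}, ‖F (p : M × M)‖ :=
  (summable_sfe_norm hF).sigma

lemma tsum_fiber_tsum_norm {F : M × M → ℂ} (hF : Summable fun p => ‖F p‖) :
    ∑' (u : M), ∑' p : {p : M × M // p.1 * p.2 = u}, ‖F (p : M × M)‖ = ∑' p, ‖F p‖ := by
  have h1 := summable_sfe_norm hF
  rw [← (sfe (M := M)).tsum_eq (fun p => ‖F p‖)]
  exact (Summable.tsum_sigma' (fun b => h1.sigma_factor b) h1).symm

lemma tsum_fiber_tsum {F : M × M → ℂ} (hF : Summable fun p => ‖F p‖) :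
    ∑' (u : M), ∑' p : {p : M × M // p.1 * p.2 = u}, F (p : M × M) = ∑' p, F p := by
  have hF' : Summable F := hF.of_norm
  have h1 : Summable fun c : (y : M) × {x : M × M // x.1 * x.2 = y} => F (sfe c) :=
    (sfe (M := M)).summable_iff.2 hF'
  rw [← (sfe (M := M)).tsum_eq F]
  exact (Summable.tsum_sigma' (fun b => h1.sigma_factor b) h1).symm

lemma norm_conv_le {f g : M → ℂ} (hf : f ∈ l1) (hg : g ∈ l1) (u : M) :
    ‖conv f g u‖ ≤ ∑' p : {p : M × M // p.1 * p.2 = u}, ‖f (p : M × M).1 * g (p : M × M).2‖ :=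
  norm_tsum_le_tsum_norm ((summable_mul_norm hf hg).subtype _)

lemma conv_mem_l1 {f g : M → ℂ} (hf : f ∈ l1) (hg : g ∈ l1) : conv f g ∈ l1 := by
  have hmn : Summable fun p : M × M => ‖f p.1 * g p.2‖ := summable_mul_norm hf hg
  have H := summable_fiber_tsum_norm hmn
  have hle := norm_conv_le hf hg
  exact Summable.of_nonneg_of_le (fun u => norm_nonneg _) hle H

lemma tsum_norm_conv_le {f g : M → ℂ} (hf : f ∈ l1) (hg : g ∈ l1) :
    ∑' u, ‖conv f g u‖ ≤ (∑' u, ‖f u‖) * (∑' u, ‖g u‖) := by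
  have h1 : ∑' u, ‖conv f g u‖ ≤
      ∑' (u : M), ∑' p : {p : M × M // p.1 * p.2 = u}, ‖f (p : M × M).1 * g (p : M × M).2‖ :=
    by
      have hmn : Summable fun p : M × M => ‖f p.1 * g p.2‖ := summable_mul_norm hf hg
      have H := summable_fiber_tsum_norm hmn
      exact Summable.tsum_le_tsum (norm_conv_le hf hg) (conv_mem_l1 hf hg) H
  rw [tsum_fiber_tsum_norm (summable_mul_norm hf hg)] at h1
  have h2 : ∑' p : M × M, ‖f p.1 * g p.2‖ ≤ ∑' p : M × M, ‖f p.1‖ * ‖g p.2‖ := by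
    refine Summable.tsum_le_tsum (fun p => norm_mul_le _ _) (summable_mul_norm hf hg) ?_
    exact hf.mul_of_nonneg hg (fun _ => norm_nonneg _) (fun _ => norm_nonneg _)
  have h3 : ∑' p : M × M, ‖f p.1‖ * ‖g p.2‖ = (∑' u, ‖f u‖) * (∑' u, ‖g u‖) := by
    have hf' : Summable fun u => ‖(‖f u‖)‖ := by simp only [norm_norm]; exact hf
    have hg' : Summable fun u => ‖(‖g u‖)‖ := by simp only [norm_norm]; exact hg
    exact (tsum_mul_tsum_of_summable_norm hf' hg').symm
  linarith

lemma tsum_conv {f g : M → ℂ} (hf : f ∈ l1) (hg : g ∈ l1) :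
    ∑' u, conv f g u = (∑' u, f u) * (∑' u, g u) := by
  rw [tsum_mul_tsum_of_summable_norm hf hg]
  exact tsum_fiber_tsum (summable_mul_norm hf hg)

lemma conv_mem_l10 {f g : M → ℂ} (hf : f ∈ l1) (hg : g ∈ l10) : conv f g ∈ l10 := by
  refine ⟨conv_mem_l1 hf hg.1, ?_⟩
  rw [tsum_conv hf hg.1, hg.2, mul_zero]



variable [Monoid M]


/-- Dirac delta -/
def dd (u : M) : M → ℂ := fun v => if v = u then 1 else 0

lemma dd_mem_l1 (u : M) : dd u ∈ l1 := by
  apply summable_of_ne_finset_zero (s := {u})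
  intro b hb
  simp only [Finset.mem_singleton] at hb
  simp [dd, hb]

lemma tsum_dd (u : M) : ∑' v, dd u v = 1 := by
  rw [tsum_eq_single u]
  · simp [dd]
  · intro b hb; simp [dd, hb]

lemma dd_apply_self (u : M) : dd u u = 1 := by simp [dd]

-- membership/closure lemmas
lemma l1_add {f g : M → ℂ} (hf : f ∈ l1) (hg : g ∈ l1) : f + g ∈ l1 := by
  refine Summable.of_nonneg_of_le (fun u => norm_nonneg _) (fun u => ?_) (hf.add hg)
  exact norm_add_le _ _

lemma l1_smul {f : M → ℂ} (c : ℂ) (hf : f ∈ l1) : c • f ∈ l1 := by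
  have : (fun u => ‖(c • f) u‖) = fun u => ‖c‖ * ‖f u‖ := by
    funext u; simp [norm_smul]
  show Summable fun u => ‖(c • f) u‖
  rw [this]
  exact hf.mul_left _

lemma l1_sub {f g : M → ℂ} (hf : f ∈ l1) (hg : g ∈ l1) : f - g ∈ l1 := by
  have : f - g = f + (-1 : ℂ) • g := by funext u; simp; ring
  rw [this]; exact l1_add hf (l1_smul _ hg)

lemma l1_summable {f : M → ℂ} (hf : f ∈ l1) : Summable f := Summable.of_norm hf

lemma tsum_add_of_l1 {f g : M → ℂ} (hf : f ∈ l1) (hg : g ∈ l1) :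
    ∑' u, (f + g) u = (∑' u, f u) + ∑' u, g u := by
  simpa using Summable.tsum_add (l1_summable hf) (l1_summable hg)

lemma l10_add {f g : M → ℂ} (hf : f ∈ l10) (hg : g ∈ l10) : f + g ∈ l10 := by
  refine ⟨l1_add hf.1 hg.1, ?_⟩
  rw [tsum_add_of_l1 hf.1 hg.1, hf.2, hg.2, add_zero]

lemma l10_smul {f : M → ℂ} (c : ℂ) (hf : f ∈ l10) : c • f ∈ l10 := by
  refine ⟨l1_smul c hf.1, ?_⟩
  have : ∑' u, (c • f) u = c * ∑' u, f u := by
    simp only [Pi.smul_apply, smul_eq_mul]; exact tsum_mul_left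
  rw [this, hf.2, mul_zero]

lemma l1_sum {ι : Type*} (s : Finset ι) (h : ι → (M → ℂ)) (hh : ∀ i ∈ s, h i ∈ l1) :
    (∑ i ∈ s, h i) ∈ l1 := by
  classical
  induction s using Finset.induction_on with
  | empty => simpa [l1] using summable_zero
  | @insert a s' hx ih =>
    rw [Finset.sum_insert hx]
    exact l1_add (hh a (Finset.mem_insert_self a s')) (ih fun i hi => hh i (Finset.mem_insert_of_mem hi))

lemma l10_sum {ι : Type*} (s : Finset ι) (h : ι → (M → ℂ)) (hh : ∀ i ∈ s, h i ∈ l10) :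
    (∑ i ∈ s, h i) ∈ l10 := by
  classical
  induction s using Finset.induction_on with
  | empty => refine ⟨by simpa [l1] using summable_zero, by simp⟩
  | @insert a s' hx ih =>
    rw [Finset.sum_insert hx]
    exact l10_add (hh a (Finset.mem_insert_self a s')) (ih fun i hi => hh i (Finset.mem_insert_of_mem hi))

lemma dd_sub_dd_mem_l10 (u v : M) : dd u - dd v ∈ l10 := by
  refine ⟨l1_sub (dd_mem_l1 u) (dd_mem_l1 v), ?_⟩
  have : ∀ w, (dd u - dd v) w = dd u w + ((-1 : ℂ) • dd v) w := by intro w; simp; ring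
  rw [tsum_congr this, Summable.tsum_add (l1_summable (dd_mem_l1 u)) (l1_summable (l1_smul _ (dd_mem_l1 v)))]
  have h2 : ∑' w, ((-1 : ℂ) • dd v) w = (-1) * ∑' w, dd v w := by
    simp only [Pi.smul_apply, smul_eq_mul]; exact tsum_mul_left
  rw [tsum_dd, h2, tsum_dd]; ring

-- conv bilinearity
lemma summable_fiber_mul {f g : M → ℂ} (hf : f ∈ l1) (hg : g ∈ l1) (u : M) :
    Summable fun p : {p : M × M // p.1 * p.2 = u} => f (p : M × M).1 * g (p : M × M).2 :=
  ((summable_mul_norm hf hg).of_norm).subtype {p : M × M | p.1 * p.2 = u}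

lemma conv_add_left {f f' g : M → ℂ} (hf : f ∈ l1) (hf' : f' ∈ l1) (hg : g ∈ l1) :
    conv (f + f') g = conv f g + conv f' g := by
  funext u
  have h1 := summable_fiber_mul hf hg u
  have h2 := summable_fiber_mul hf' hg u
  simp only [conv, Pi.add_apply]
  have : ∀ p : {p : M × M // p.1 * p.2 = u},
      (f (p : M × M).1 + f' (p : M × M).1) * g (p : M × M).2
        = f (p : M × M).1 * g (p : M × M).2 + f' (p : M × M).1 * g (p : M × M).2 := by
    intro p; ring
  rw [tsum_congr this, Summable.tsum_add h1 h2]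

lemma conv_smul_left (f g : M → ℂ) (c : ℂ) :
    conv (c • f) g = c • conv f g := by
  funext u
  simp only [conv, Pi.smul_apply, smul_eq_mul]
  rw [← tsum_mul_left]
  congr 1; funext p; ring

lemma conv_zero_left (g : M → ℂ) : conv 0 g = 0 := by
  funext u
  simp [conv]

lemma conv_sum_left {ι : Type*} (s : Finset ι) (h : ι → (M → ℂ)) (g : M → ℂ)
    (hh : ∀ i ∈ s, h i ∈ l1) (hg : g ∈ l1) :
    conv (∑ i ∈ s, h i) g = ∑ i ∈ s, conv (h i) g := by
  classical
  induction s using Finset.induction_on with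
  | empty => simpa using conv_zero_left g
  | @insert a s' hx ih =>
    rw [Finset.sum_insert hx, Finset.sum_insert hx,
      conv_add_left (hh a (Finset.mem_insert_self a s'))
        (l1_sum s' h fun i hi => hh i (Finset.mem_insert_of_mem hi)) hg,
      ih fun i hi => hh i (Finset.mem_insert_of_mem hi)]

lemma conv_dd_dd (s t : M) : conv (dd s) (dd t) = dd (s * t) := by
  funext u
  simp only [conv, dd]
  by_cases h : s * t = u
  · rw [tsum_eq_single (⟨(s, t), h⟩ : {p : M × M // p.1 * p.2 = u})]
    · rw [if_pos rfl, if_pos rfl, if_pos h.symm]; ring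
    · rintro ⟨⟨a, b⟩, hab⟩ hne
      by_cases ha : a = s
      · by_cases hb : b = t
        · exact absurd (Subtype.ext (by simp [ha, hb])) hne
        · simp [hb]
      · simp [ha]
  · have : ∀ p : {p : M × M // p.1 * p.2 = u},
        (if (p : M × M).1 = s then (1:ℂ) else 0) * (if (p : M × M).2 = t then (1:ℂ) else 0) = 0 := by
      rintro ⟨⟨a, b⟩, hab⟩
      by_cases ha : a = s
      · by_cases hb : b = t
        · exfalso; apply h; rw [← ha, ← hb]; exact hab
        · simp [hb]
      · simp [ha]
    rw [tsum_congr this, tsum_zero, if_neg (fun hu => h hu.symm)]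


lemma dd_apply (u v : M) : dd u v = if v = u then 1 else 0 := rfl

lemma tsum_norm_dd (w : M) : ∑' s, ‖dd w s‖ = 1 := by
  rw [tsum_eq_single w]
  · simp [dd]
  · intro b hb; simp [dd, hb]


variable [Monoid M]

lemma tsum_norm_mul_norm {f g : M → ℂ} (hf : f ∈ l1) (hg : g ∈ l1) :
    ∑' p : M × M, ‖f p.1 * g p.2‖ = (∑' u, ‖f u‖) * (∑' u, ‖g u‖) := by
  have hf' : Summable fun u => ‖(‖f u‖)‖ := by simp only [norm_norm]; exact hf
  have hg' : Summable fun u => ‖(‖g u‖)‖ := by simp only [norm_norm]; exact hg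
  calc ∑' p : M × M, ‖f p.1 * g p.2‖ = ∑' p : M × M, ‖f p.1‖ * ‖g p.2‖ :=
        tsum_congr fun p => norm_mul _ _
    _ = (∑' u, ‖f u‖) * ∑' u, ‖g u‖ := (tsum_mul_tsum_of_summable_norm hf' hg').symm

lemma norm_conv_apply_le {f g : M → ℂ} (hf : f ∈ l1) (hg : g ∈ l1) (v : M) :
    ‖conv f g v‖ ≤ (∑' u, ‖f u‖) * (∑' u, ‖g u‖) := by
  have h0 : ‖conv f g v‖ ≤ ∑' p : {p : M × M // p.1 * p.2 = v}, ‖f (p : M × M).1 * g (p : M × M).2‖ :=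
    norm_tsum_le_tsum_norm ((summable_mul_norm hf hg).subtype _)
  have h1 : ∑' p : {p : M × M // p.1 * p.2 = v}, ‖f (p : M × M).1 * g (p : M × M).2‖
      ≤ ∑' p : M × M, ‖f p.1 * g p.2‖ :=
    Summable.tsum_subtype_le (fun p : M × M => ‖f p.1 * g p.2‖) {p : M × M | p.1 * p.2 = v}
      (fun p => norm_nonneg _) (summable_mul_norm hf hg)
  rw [tsum_norm_mul_norm hf hg] at h1
  linarith

section agg

variable {c : M → ℂ} {F : M → M → ℂ} {g : M → ℂ} {B : ℝ}

/-- joint summability of `(u, s) ↦ ‖c u * F u s‖` -/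
lemma agg_joint (hc : c ∈ l1) (hF : ∀ u, F u ∈ l1) (hB : ∀ u, ∑' s, ‖F u s‖ ≤ B) :
    Summable fun w : M × M => ‖c w.1 * F w.1 w.2‖ := by
  rw [summable_prod_of_nonneg (fun w => norm_nonneg _)]
  constructor
  · intro u
    have : (fun s => ‖c u * F u s‖) = fun s => ‖c u‖ * ‖F u s‖ := by
      funext s; rw [norm_mul]
    rw [this]
    exact (hF u).mul_left _
  · refine Summable.of_nonneg_of_le (fun u => tsum_nonneg fun s => norm_nonneg _)
      (fun u => ?_) (hc.mul_right B)
    have : (fun s => ‖c u * F u s‖) = fun s => ‖c u‖ * ‖F u s‖ := by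
      funext s; rw [norm_mul]
    rw [this, tsum_mul_left]
    calc ‖c u‖ * ∑' s, ‖F u s‖ ≤ ‖c u‖ * B :=
          mul_le_mul_of_nonneg_left (hB u) (norm_nonneg _)
      _ = ‖c u‖ * B := rfl

lemma agg_mem_l1 (hc : c ∈ l1) (hF : ∀ u, F u ∈ l1) (hB : ∀ u, ∑' s, ‖F u s‖ ≤ B)
    (hB0 : 0 ≤ B) :
    (fun s => ∑' u, c u * F u s) ∈ l1 := by
  have hJ := agg_joint hc hF hB
  have hswap : Summable fun w : M × M => ‖c w.2 * F w.2 w.1‖ := by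
    have := (Equiv.prodComm M M).summable_iff.2 hJ
    simpa [Function.comp_def] using this
  have hcols : ∀ s : M, Summable fun u => ‖c u * F u s‖ := by
    intro s
    have h1 := hswap.prod_factor s
    simpa using h1
  have hcolsums : Summable fun s : M => ∑' u, ‖c u * F u s‖ :=
    ((summable_prod_of_nonneg (fun w => norm_nonneg _)).1 hswap).2
  refine Summable.of_nonneg_of_le (fun s => norm_nonneg _) (fun s => ?_) hcolsums
  exact norm_tsum_le_tsum_norm (hcols s)

lemma agg_summable_conv (hc : c ∈ l1) (hF : ∀ u, F u ∈ l1) (hB : ∀ u, ∑' s, ‖F u s‖ ≤ B)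
    (hg : g ∈ l1) (v : M) :
    Summable fun u => c u * conv (F u) g v := by
  refine Summable.of_norm ?_
  refine Summable.of_nonneg_of_le (fun u => norm_nonneg _) (fun u => ?_)
    (hc.mul_right (B * ∑' t, ‖g t‖))
  rw [norm_mul]
  refine mul_le_mul_of_nonneg_left ?_ (norm_nonneg _)
  calc ‖conv (F u) g v‖ ≤ (∑' s, ‖F u s‖) * ∑' t, ‖g t‖ := norm_conv_apply_le (hF u) hg v
    _ ≤ B * ∑' t, ‖g t‖ := by
        refine mul_le_mul_of_nonneg_right (hB u) (tsum_nonneg fun t => norm_nonneg _)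

lemma agg_conv_eq (hc : c ∈ l1) (hF : ∀ u, F u ∈ l1) (hB : ∀ u, ∑' s, ‖F u s‖ ≤ B)
    (hg : g ∈ l1) (hB0 : 0 ≤ B) (v : M) :
    conv (fun s => ∑' u, c u * F u s) g v = ∑' u, c u * conv (F u) g v := by
  classical
  -- the fiber
  set P := {p : M × M // p.1 * p.2 = v} with hP
  -- the three-variable norm function
  have hK : Summable fun w : M × (M × M) => ‖c w.1‖ * (‖F w.1 w.2.1‖ * ‖g w.2.2‖) := by
    rw [summable_prod_of_nonneg (fun w => by positivity)]
    constructor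
    · intro u
      dsimp only
      have h1 := summable_mul_norm (hF u) hg
      have h2 : Summable fun q : M × M => ‖F u q.1‖ * ‖g q.2‖ := by
        have : (fun q : M × M => ‖F u q.1 * g q.2‖) = fun q => ‖F u q.1‖ * ‖g q.2‖ := by
          funext q; rw [norm_mul]
        rwa [this] at h1
      exact h2.mul_left ‖c u‖
    · refine Summable.of_nonneg_of_le (fun u => tsum_nonneg fun q => by positivity)
        (fun u => ?_) (hc.mul_right (B * ∑' t, ‖g t‖))
      dsimp only
      rw [tsum_mul_left]
      refine mul_le_mul_of_nonneg_left ?_ (norm_nonneg _)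
      have heq : ∑' q : M × M, ‖F u q.1‖ * ‖g q.2‖ = (∑' s, ‖F u s‖) * ∑' t, ‖g t‖ := by
        have h := tsum_norm_mul_norm (hF u) hg
        rw [← h]; congr 1; funext q; rw [norm_mul]
      rw [heq]
      exact mul_le_mul_of_nonneg_right (hB u) (tsum_nonneg fun t => norm_nonneg _)
  -- summability of the uncurried function on P × M
  have hiota : Function.Injective (fun pu : P × M => ((pu.2, (pu.1 : M × M)) : M × (M × M))) := by
    rintro ⟨p, u⟩ ⟨p', u'⟩ h
    simp only [Prod.mk.injEq] at h
    obtain ⟨h1, h2⟩ := h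
    exact Prod.ext (Subtype.ext h2) h1
  have hHnorm : Summable fun pu : P × M => ‖c pu.2 * F pu.2 ((pu.1 : M × M)).1 * g ((pu.1 : M × M)).2‖ := by
    have h1 : Summable ((fun w : M × (M × M) => ‖c w.1‖ * (‖F w.1 w.2.1‖ * ‖g w.2.2‖)) ∘
        (fun pu : P × M => ((pu.2, (pu.1 : M × M)) : M × (M × M)))) :=
      hK.comp_injective hiota
    refine Summable.of_nonneg_of_le (fun pu => norm_nonneg _) (fun pu => ?_) h1
    simp only [Function.comp_apply]
    rw [norm_mul, norm_mul]
    ring_nf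
    exact le_of_eq (by ring)
  have hH : Summable (Function.uncurry fun (p : P) (u : M) =>
      c u * F u ((p : M × M)).1 * g ((p : M × M)).2) := by
    refine Summable.of_norm ?_
    have : (fun pu : P × M => ‖Function.uncurry (fun (p : P) (u : M) =>
        c u * F u ((p : M × M)).1 * g ((p : M × M)).2) pu‖)
        = fun pu : P × M => ‖c pu.2 * F pu.2 ((pu.1 : M × M)).1 * g ((pu.1 : M × M)).2‖ := by
      funext pu; rfl
    rw [this]
    exact hHnorm
  have hrows : ∀ p : P, Summable fun u => c u * F u ((p : M × M)).1 * g ((p : M × M)).2 := by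
    intro p
    refine Summable.of_norm ?_
    refine Summable.of_nonneg_of_le (fun u => norm_nonneg _) (fun u => ?_)
      (hc.mul_right (B * ‖g ((p : M × M)).2‖))
    rw [norm_mul, norm_mul, mul_assoc]
    refine mul_le_mul_of_nonneg_left ?_ (norm_nonneg _)
    refine mul_le_mul_of_nonneg_right ?_ (norm_nonneg _)
    exact le_trans (Summable.le_tsum (hF u) _ (fun _ _ => norm_nonneg _)) (hB u)
  have hcols : ∀ u : M, Summable fun p : P => c u * F u ((p : M × M)).1 * g ((p : M × M)).2 := by
    intro u
    have h1 := (summable_fiber_mul (hF u) hg v).mul_left (c u)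
    have : (fun p : P => c u * F u ((p : M × M)).1 * g ((p : M × M)).2)
        = fun p : P => c u * (F u ((p : M × M)).1 * g ((p : M × M)).2) := by
      funext p; ring
    rw [this]
    exact h1
  -- now compute
  have step1 : conv (fun s => ∑' u, c u * F u s) g v
      = ∑' p : P, ∑' u : M, c u * F u ((p : M × M)).1 * g ((p : M × M)).2 := by
    simp only [conv]
    refine tsum_congr fun p => ?_
    rw [← tsum_mul_right]
  have step2 : ∑' p : P, ∑' u : M, c u * F u ((p : M × M)).1 * g ((p : M × M)).2
      = ∑' u : M, ∑' p : P, c u * F u ((p : M × M)).1 * g ((p : M × M)).2 :=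
    (Summable.tsum_comm' hH hrows hcols).symm
  have step3 : ∀ u, ∑' p : P, c u * F u ((p : M × M)).1 * g ((p : M × M)).2
      = c u * conv (F u) g v := by
    intro u
    simp only [conv]
    rw [← Summable.tsum_mul_left (c u) (summable_fiber_mul (hF u) hg v)]
    refine tsum_congr fun p => ?_
    ring
  rw [step1, step2]
  exact tsum_congr step3

end agg



variable [Monoid M]

-- new lemmas

lemma l1_zero : (0 : M → ℂ) ∈ l1 := by
  have : Summable fun u : M => ‖(0 : M → ℂ) u‖ := by simpa using summable_zero
  exact this

lemma conv_sub_right {f g g' : M → ℂ} (hf : f ∈ l1) (hg : g ∈ l1) (hg' : g' ∈ l1) :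
    conv f (g - g') = conv f g - conv f g' := by
  funext u
  have h1 := summable_fiber_mul hf hg u
  have h2 := summable_fiber_mul hf hg' u
  simp only [conv, Pi.sub_apply]
  have : ∀ p : {p : M × M // p.1 * p.2 = u},
      f (p : M × M).1 * (g (p : M × M).2 - g' (p : M × M).2)
        = f (p : M × M).1 * g (p : M × M).2 - f (p : M × M).1 * g' (p : M × M).2 := by
    intro p; ring
  rw [tsum_congr this, Summable.tsum_sub h1 h2]

lemma conv_dd_sub (w x : M) :
    conv (dd w) (dd x - dd 1) = dd (w * x) - dd w := by
  rw [conv_sub_right (dd_mem_l1 w) (dd_mem_l1 x) (dd_mem_l1 1), conv_dd_dd, conv_dd_dd, mul_one]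

lemma tsum_norm_add_le {f g : M → ℂ} (hf : f ∈ l1) (hg : g ∈ l1) :
    ∑' u, ‖(f + g) u‖ ≤ (∑' u, ‖f u‖) + ∑' u, ‖g u‖ := by
  calc ∑' u, ‖(f + g) u‖ ≤ ∑' u, (‖f u‖ + ‖g u‖) :=
        Summable.tsum_le_tsum (fun u => norm_add_le _ _) (l1_add hf hg) (hf.add hg)
    _ = _ := Summable.tsum_add hf hg

lemma tsum_norm_neg_smul {f : M → ℂ} : ∑' u, ‖((-1 : ℂ) • f) u‖ = ∑' u, ‖f u‖ := by
  congr 1; funext u; simp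

/-- Representation of `dd u - dd 1` from an ancestry. -/
lemma rep_of_ancestry (X : Finset M) (k : ℕ) (xfun : Fin k → M)
    (hsurj : ∀ x ∈ X, ∃ i, xfun i = x) :
    ∀ (n : ℕ) (u : M) (z : ℕ → M), IsAncestry (X : Set M) u z n →
    ∃ T : Fin k → (M → ℂ), (∀ i, T i ∈ l1) ∧ (∀ i, ∑' s, ‖T i s‖ ≤ (n : ℝ)) ∧
      (∑ i, conv (T i) (dd (xfun i) - dd 1)) = dd u - dd 1 := by
  intro n
  induction n with
  | zero => intro u z h; exact absurd h.1 (by omega)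
  | succ n ih =>
    intro u z h
    obtain ⟨-, hz1, hzn, hstep⟩ := h
    by_cases hn : n = 0
    · -- length 1 : u = 1
      subst hn
      refine ⟨0, fun i => l1_zero, fun i => ?_, ?_⟩
      · simp
      · have hu : u = 1 := by rw [← hz1, ← hzn]
        rw [hu]
        simp [conv_zero_left]
    · -- length n+1, n ≥ 1
      have hn1 : 1 ≤ n := Nat.one_le_iff_ne_zero.2 hn
      -- tail ancestry for z 2 of length n
      have htail : IsAncestry (X : Set M) (z 2) (fun i => z (i + 1)) n := by
        refine ⟨hn1, rfl, hzn, ?_⟩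
        intro i hi1 hin
        obtain ⟨x, hx, hcase⟩ := hstep (i + 1) (by omega) (by omega)
        refine ⟨x, hx, ?_⟩
        have he : i + 1 - 1 = i := by omega
        have he2 : i - 1 + 1 = i := by omega
        rw [he] at hcase
        simpa [he2] using hcase
      obtain ⟨T'', hT1, hT2, hT3⟩ := ih (z 2) (fun i => z (i + 1)) htail
      -- head edge between u = z 1 and z 2
      obtain ⟨x, hx, hcase⟩ := hstep 2 (by omega) (by omega)
      simp only [show (2 : ℕ) - 1 = 1 from rfl, hz1] at hcase
      obtain ⟨i₀, hi₀⟩ := hsurj x hx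
      -- head coefficient
      set head : M → ℂ := if z 2 * x = u then dd (z 2) else (-1 : ℂ) • dd u with hhead
      have hheadl1 : head ∈ l1 := by
        rw [hhead]; split
        · exact dd_mem_l1 _
        · exact l1_smul _ (dd_mem_l1 _)
      have hheadnorm : ∑' s, ‖head s‖ ≤ 1 := by
        rw [hhead]; split
        · rw [tsum_norm_dd]
        · rw [tsum_norm_neg_smul, tsum_norm_dd]
      have hheadconv : conv head (dd (xfun i₀) - dd 1) = dd u - dd (z 2) := by
        rw [hhead, hi₀]
        rcases hcase with hA | hB
        · rw [if_pos hA, conv_dd_sub, hA]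
        · by_cases hA : z 2 * x = u
          · rw [if_pos hA, conv_dd_sub, hA]
          · rw [if_neg hA, conv_smul_left, conv_dd_sub, ← hB]
            funext v
            simp only [Pi.smul_apply, Pi.sub_apply, smul_eq_mul]
            ring
      refine ⟨fun i => T'' i + if i = i₀ then head else 0, ?_, ?_, ?_⟩
      · intro i
        refine l1_add (hT1 i) ?_
        by_cases hii : i = i₀
        · rw [if_pos hii]; exact hheadl1
        · rw [if_neg hii]; exact l1_zero
      · intro i
        by_cases hii : i = i₀
        · calc ∑' s, ‖(T'' i + if i = i₀ then head else 0) s‖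
              ≤ (∑' s, ‖T'' i s‖) + ∑' s, ‖(if i = i₀ then head else 0) s‖ := by
                refine tsum_norm_add_le (hT1 i) ?_
                rw [if_pos hii]; exact hheadl1
            _ ≤ (n : ℝ) + 1 := by
                refine add_le_add (hT2 i) ?_
                rw [if_pos hii]; exact hheadnorm
            _ = ((n + 1 : ℕ) : ℝ) := by push_cast; ring
        · calc ∑' s, ‖(T'' i + if i = i₀ then head else 0) s‖
              ≤ (∑' s, ‖T'' i s‖) + ∑' s, ‖(if i = i₀ then head else 0) s‖ := by
                refine tsum_norm_add_le (hT1 i) ?_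
                rw [if_neg hii]; exact l1_zero
            _ ≤ (n : ℝ) + 1 := by
                refine add_le_add (hT2 i) ?_
                rw [if_neg hii]
                simp
            _ = ((n + 1 : ℕ) : ℝ) := by push_cast; ring
      · have hsplit : ∀ i : Fin k,
            conv (T'' i + if i = i₀ then head else 0) (dd (xfun i) - dd 1)
              = conv (T'' i) (dd (xfun i) - dd 1)
                + conv (if i = i₀ then head else 0) (dd (xfun i) - dd 1) := by
          intro i
          refine conv_add_left (hT1 i) ?_ (l1_sub (dd_mem_l1 _) (dd_mem_l1 _))
          by_cases hii : i = i₀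
          · rw [if_pos hii]; exact hheadl1
          · rw [if_neg hii]; exact l1_zero
        rw [Finset.sum_congr rfl (fun i _ => hsplit i), Finset.sum_add_distrib, hT3]
        have hsingle : (∑ i : Fin k, conv (if i = i₀ then head else 0) (dd (xfun i) - dd 1))
            = dd u - dd (z 2) := by
          rw [Finset.sum_eq_single i₀]
          · rw [if_pos rfl, hheadconv]
          · intro b _ hb
            rw [if_neg hb, conv_zero_left]
          · intro habs; exact absurd (Finset.mem_univ i₀) habs
        rw [hsingle]
        funext v
        simp only [Pi.add_apply, Pi.sub_apply]
        ring



variable [Monoid M]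

theorem easy_dir (h : PseudoFinite M) : IsFinGenLeftIdealOf (l10 : Set (M → ℂ)) := by
  classical
  obtain ⟨X, N, hanc⟩ := h
  set k := X.card with hk
  set xfun : Fin k → M := fun i => (X.equivFin.symm i : M) with hxfun
  have hsurj : ∀ x ∈ X, ∃ i, xfun i = x := by
    intro x hx
    exact ⟨X.equivFin ⟨x, hx⟩, by simp [hxfun]⟩
  set xs : Fin k → (M → ℂ) := fun i => dd (xfun i) - dd 1 with hxs
  have hxsl1 : ∀ i, xs i ∈ l1 := fun i => l1_sub (dd_mem_l1 _) (dd_mem_l1 _)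
  have hxsl10 : ∀ i, xs i ∈ l10 := fun i => dd_sub_dd_mem_l10 _ _
  refine ⟨k, xs, hxsl1, ?_⟩
  ext f
  constructor
  · -- f ∈ l10 → representation
    intro hf
    have key : ∀ u : M, ∃ T : Fin k → (M → ℂ), (∀ i, T i ∈ l1) ∧
        (∀ i, ∑' s, ‖T i s‖ ≤ (N : ℝ)) ∧ (∑ i, conv (T i) (xs i)) = dd u - dd 1 := by
      intro u
      obtain ⟨n, z, hnN, hz⟩ := hanc u
      obtain ⟨T, hT1, hT2, hT3⟩ := rep_of_ancestry X k xfun hsurj n u z hz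
      exact ⟨T, hT1, fun i => le_trans (hT2 i) (by exact_mod_cast hnN), hT3⟩
    choose T hT1 hT2 hT3 using key
    set a : Fin k → (M → ℂ) := fun i => fun s => ∑' u, f u * T u i s with ha
    have hN0 : (0 : ℝ) ≤ (N : ℝ) := Nat.cast_nonneg _
    have hal1 : ∀ i, a i ∈ l1 := by
      intro i
      exact agg_mem_l1 hf.1 (fun u => hT1 u i) (fun u => hT2 u i) hN0
    refine ⟨a, fun _ => 0, hal1, ?_⟩
    funext v
    have hsum_apply : (∑ i, (conv (a i) (xs i) + (0 : ℂ) • xs i)) v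
        = ∑ i, conv (a i) (xs i) v := by
      rw [Finset.sum_apply]
      refine Finset.sum_congr rfl fun i _ => ?_
      simp
    rw [hsum_apply]
    have hconv : ∀ i : Fin k, conv (a i) (xs i) v = ∑' u, f u * conv (T u i) (xs i) v := by
      intro i
      exact agg_conv_eq hf.1 (fun u => hT1 u i) (fun u => hT2 u i) (hxsl1 i) hN0 v
    rw [Finset.sum_congr rfl fun i _ => hconv i]
    rw [← Summable.tsum_finsetSum (fun i _ => agg_summable_conv hf.1 (fun u => hT1 u i) (fun u => hT2 u i) (hxsl1 i) v)]
    have hinner : ∀ u : M, (∑ i, f u * conv (T u i) (xs i) v)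
        = f u * dd u v - f u * dd 1 v := by
      intro u
      rw [← Finset.mul_sum]
      have hh := congrArg (fun w : M → ℂ => w v) (hT3 u)
      simp only [Finset.sum_apply, Pi.sub_apply] at hh
      rw [hh]; ring
    rw [tsum_congr hinner]
    have hs1 : Summable fun u : M => f u * dd u v := by
      apply summable_of_ne_finset_zero (s := {v})
      intro b hb
      simp only [Finset.mem_singleton] at hb
      rw [dd_apply, if_neg (fun hh => hb hh.symm), mul_zero]
    have hs2 : Summable fun u : M => f u * dd 1 v :=
      (l1_summable hf.1).mul_right _
    rw [Summable.tsum_sub hs1 hs2]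
    have he1 : ∑' u : M, f u * dd u v = f v := by
      rw [tsum_eq_single v]
      · rw [dd_apply, if_pos rfl, mul_one]
      · intro b hb
        rw [dd_apply, if_neg (fun hh => hb hh.symm), mul_zero]
    have he2 : ∑' u : M, f u * dd 1 v = (∑' u, f u) * dd 1 v := tsum_mul_right
    rw [he1, he2, hf.2, zero_mul, sub_zero]
  · -- representation → f ∈ l10
    rintro ⟨a, c, hal1, rfl⟩
    refine l10_sum Finset.univ _ fun i _ => ?_
    exact l10_add (conv_mem_l10 (hal1 i) (hxsl10 i)) (l10_smul _ (hxsl10 i))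



variable [Monoid M]

/-- elements reachable from 1 in at most k undirected right-multiplication steps -/
def reach (X : Finset M) : ℕ → Set M
  | 0 => {1}
  | k + 1 => reach X k ∪ {v | ∃ w ∈ reach X k, ∃ x ∈ X, v * x = w ∨ w * x = v}

lemma reach_mono (X : Finset M) {j k : ℕ} (h : j ≤ k) : reach X j ⊆ reach X k := by
  induction k with
  | zero => rw [Nat.le_zero.mp h]
  | succ k ih =>
    rcases Nat.lt_or_ge j (k+1) with hj | hj
    · exact fun v hv => Or.inl (ih (by omega) hv)
    · have : j = k + 1 := by omega
      rw [this]

lemma reach_step {X : Finset M} {s : M} {k : ℕ} (hs : s ∈ reach X k) {x : M} (hx : x ∈ X) :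
    s * x ∈ reach X (k + 1) ∧ (∀ v, v * x = s → v ∈ reach X (k + 1)) := by
  constructor
  · exact Or.inr ⟨s, hs, x, hx, Or.inr rfl⟩
  · intro v hv
    exact Or.inr ⟨s, hs, x, hx, Or.inl hv⟩

/-- truncated distance to 1 -/
def dK (X : Finset M) (K : ℕ) (v : M) : ℕ := sInf ({k | v ∈ reach X k} ∪ {K})

lemma dK_le (X : Finset M) (K : ℕ) (v : M) : dK X K v ≤ K :=
  Nat.sInf_le (Or.inr rfl)

lemma dK_one (X : Finset M) (K : ℕ) : dK X K 1 = 0 :=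
  Nat.le_zero.mp (Nat.sInf_le (Or.inl (by simp [reach])))

lemma dK_le_of_reach {X : Finset M} {K k : ℕ} {v : M} (h : v ∈ reach X k) : dK X K v ≤ k :=
  Nat.sInf_le (Or.inl h)

lemma reach_of_dK_lt {X : Finset M} {K : ℕ} {v : M} (h : dK X K v < K) :
    v ∈ reach X (dK X K v) := by
  have hne : ({k | v ∈ reach X k} ∪ {K} : Set ℕ).Nonempty := ⟨K, Or.inr rfl⟩
  have hmem := Nat.sInf_mem hne
  rcases hmem with hm | hm
  · exact hm
  · exfalso
    rw [Set.mem_singleton_iff] at hm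
    unfold dK at h
    omega

lemma dK_mul_le {X : Finset M} {K : ℕ} {s x : M} (hx : x ∈ X) :
    dK X K (s * x) ≤ dK X K s + 1 := by
  rcases Nat.lt_or_ge (dK X K s) K with h | h
  · have := (reach_step (reach_of_dK_lt h) hx).1
    exact dK_le_of_reach this
  · have := dK_le X K (s * x); omega

lemma dK_le_mul {X : Finset M} {K : ℕ} {s x : M} (hx : x ∈ X) :
    dK X K s ≤ dK X K (s * x) + 1 := by
  rcases Nat.lt_or_ge (dK X K (s * x)) K with h | h
  · have := (reach_step (reach_of_dK_lt h) hx).2 s rfl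
    exact dK_le_of_reach this
  · have := dK_le X K s; omega

lemma dK_mem_X_le_one {X : Finset M} {K : ℕ} {t : M} (ht : t ∈ X) : dK X K t ≤ 1 := by
  have h0 : (1 : M) ∈ reach X 0 := by simp [reach]
  have := (reach_step h0 ht).1
  rw [one_mul] at this
  exact dK_le_of_reach this

/-- the real-valued truncated distance -/
def psi (X : Finset M) (K : ℕ) (v : M) : ℝ := (dK X K v : ℝ)

lemma psi_nonneg (X : Finset M) (K : ℕ) (v : M) : 0 ≤ psi X K v := Nat.cast_nonneg _
lemma psi_le (X : Finset M) (K : ℕ) (v : M) : psi X K v ≤ K := by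
  unfold psi
  exact_mod_cast dK_le X K v
lemma psi_one (X : Finset M) (K : ℕ) : psi X K 1 = 0 := by simp [psi, dK_one]

lemma abs_psi_mul_sub {X : Finset M} {K : ℕ} {s t : M} (ht : t ∈ X) :
    |psi X K (s * t) - psi X K s| ≤ 1 := by
  have h1 := dK_mul_le (K := K) (s := s) ht
  have h2 := dK_le_mul (K := K) (s := s) ht
  have h1' : (dK X K (s * t) : ℝ) ≤ (dK X K s : ℝ) + 1 := by exact_mod_cast h1
  have h2' : (dK X K s : ℝ) ≤ (dK X K (s * t) : ℝ) + 1 := by exact_mod_cast h2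
  simp only [psi]
  rw [abs_le]
  constructor <;> linarith

lemma abs_psi_sub_le_K {X : Finset M} {K : ℕ} (a b : M) :
    |psi X K a - psi X K b| ≤ K := by
  rw [abs_le]
  have h1 := psi_nonneg X K a; have h2 := psi_nonneg X K b
  have h3 := psi_le X K a; have h4 := psi_le X K b
  constructor <;> linarith

/-- from reach to ancestry -/
lemma ancestry_of_reach {X : Finset M} : ∀ {k : ℕ} {u : M}, u ∈ reach X k →
    ∃ n, n ≤ k + 1 ∧ ∃ z : ℕ → M, IsAncestry (X : Set M) u z n := by
  intro k
  induction k with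
  | zero =>
    intro u hu
    rw [reach, Set.mem_singleton_iff] at hu
    exact ⟨1, le_refl _, fun _ => 1, le_refl _, hu.symm, rfl, fun i h1 h2 => absurd (h1.trans_le h2) (by omega)⟩
  | succ k ih =>
    intro u hu
    rcases hu with hu | ⟨w, hw, x, hx, hcase⟩
    · obtain ⟨n, hn, z, hz⟩ := ih hu
      exact ⟨n, by omega, z, hz⟩
    · obtain ⟨n, hn, z, hz⟩ := ih hw
      obtain ⟨hn1, hz1, hzn, hstep⟩ := hz
      refine ⟨n + 1, by omega, fun i => if i ≤ 1 then u else z (i - 1), ?_, ?_, ?_, ?_⟩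
      · omega
      · simp
      · show (if n + 1 ≤ 1 then u else z (n + 1 - 1)) = 1
        rw [if_neg (by omega)]
        simpa using hzn
      · intro i hi1 hin
        by_cases hi2 : i = 2
        · subst hi2
          refine ⟨x, hx, ?_⟩
          show (if (2:ℕ) ≤ 1 then u else z (2 - 1)) * x = (if (2:ℕ) - 1 ≤ 1 then u else z (2 - 1 - 1))
            ∨ (if (2:ℕ) ≤ 1 then u else z (2 - 1)) = (if (2:ℕ) - 1 ≤ 1 then u else z (2 - 1 - 1)) * x
          rw [if_neg (by omega), if_pos (by omega)]
          have e1 : (2:ℕ) - 1 = 1 := rfl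
          rw [e1, hz1]
          rcases hcase with h | h
          · exact Or.inr h.symm
          · exact Or.inl h
        · -- i ≥ 3
          obtain ⟨y, hy, hcy⟩ := hstep (i - 1) (by omega) (by omega)
          refine ⟨y, hy, ?_⟩
          show (if i ≤ 1 then u else z (i - 1)) * y = (if i - 1 ≤ 1 then u else z (i - 1 - 1))
            ∨ (if i ≤ 1 then u else z (i - 1)) = (if i - 1 ≤ 1 then u else z (i - 1 - 1)) * y
          rw [if_neg (by omega), if_neg (by omega)]
          exact hcy


lemma psi_mem_X_le_one {X : Finset M} {K : ℕ} {t : M} (ht : t ∈ X) : psi X K t ≤ 1 := by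
  have := dK_mem_X_le_one (K := K) ht
  unfold psi
  exact_mod_cast this

lemma psi_eq_dK (X : Finset M) (K : ℕ) (v : M) :
    ∃ k : ℕ, psi X K v = (k : ℝ) ∧
      (k < K → ∃ n, n ≤ k + 1 ∧ ∃ z : ℕ → M, IsAncestry (X : Set M) v z n) :=
  ⟨dK X K v, rfl, fun h => ancestry_of_reach (reach_of_dK_lt h)⟩


variable [Monoid M]

-- the Banach space ℓ¹(M)
abbrev EM (M : Type*) [Monoid M] := lp (fun _ : M => ℂ) 1

lemma one_toReal_pos : (0 : ℝ) < (1 : ENNReal).toReal := by norm_num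

lemma mem_l1_iff {f : M → ℂ} : f ∈ l1 ↔ Memℓp f 1 := by
  rw [memℓp_gen_iff one_toReal_pos]
  constructor <;> intro h <;> [skip; skip] <;>
    · have : (fun u : M => ‖f u‖ ^ (1 : ENNReal).toReal) = fun u => ‖f u‖ := by
        funext u; rw [ENNReal.toReal_one, Real.rpow_one]
      first
        | (rw [this]; exact h)
        | (rw [this] at h; exact h)

def toE (f : M → ℂ) (hf : f ∈ l1) : EM M := ⟨f, mem_l1_iff.1 hf⟩

@[simp] lemma toE_coe (f : M → ℂ) (hf : f ∈ l1) : ((toE f hf : EM M) : M → ℂ) = f := rfl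

lemma coe_mem_l1 (f : EM M) : (⇑f : M → ℂ) ∈ l1 := mem_l1_iff.2 (lp.memℓp f)

lemma norm_E (f : EM M) : ‖f‖ = ∑' u, ‖f u‖ := by
  rw [lp.norm_eq_tsum_rpow one_toReal_pos f]
  simp [ENNReal.toReal_one, Real.rpow_one]

/-- the augmentation functional -/
def sigmaLin : EM M →ₗ[ℂ] ℂ where
  toFun f := ∑' u, f u
  map_add' f g := by
    dsimp only
    have h1 : (⇑(f + g) : M → ℂ) = ⇑f + ⇑g := lp.coeFn_add f g
    rw [h1]
    exact Summable.tsum_add (l1_summable (coe_mem_l1 f)) (l1_summable (coe_mem_l1 g))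
  map_smul' c f := by
    dsimp only
    have h1 : (⇑(c • f) : M → ℂ) = c • ⇑f := lp.coeFn_smul c f
    rw [h1]
    simp only [Pi.smul_apply, smul_eq_mul, RingHom.id_apply]
    exact tsum_mul_left

def sigmaCLM : EM M →L[ℂ] ℂ :=
  LinearMap.mkContinuous sigmaLin 1 (by
    intro f
    rw [one_mul, norm_E]
    exact norm_tsum_le_tsum_norm (coe_mem_l1 f))

@[simp] lemma sigmaCLM_apply (f : EM M) : sigmaCLM f = ∑' u, f u := rfl

def Kker (M : Type*) [Monoid M] : Submodule ℂ (EM M) := (sigmaCLM (M := M)).ker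

instance : CompleteSpace (Kker M) :=
  IsClosed.completeSpace_coe (hs := ContinuousLinearMap.isClosed_ker sigmaCLM)

section T

variable {n : ℕ} (x : Fin n → (M → ℂ))

def bigfun (d : (Fin n → EM M) × (Fin n → ℂ)) : M → ℂ :=
  ∑ i, (conv (⇑(d.1 i)) (x i) + d.2 i • x i)

lemma bigfun_mem_l1 (hx : ∀ i, x i ∈ l1) (d : (Fin n → EM M) × (Fin n → ℂ)) : bigfun x d ∈ l1 := by
  refine l1_sum Finset.univ _ fun i _ => ?_
  exact l1_add (conv_mem_l1 (coe_mem_l1 (d.1 i)) (hx i)) (l1_smul _ (hx i))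

def T0lin (hx : ∀ i, x i ∈ l1) : ((Fin n → EM M) × (Fin n → ℂ)) →ₗ[ℂ] EM M where
  toFun d := toE (bigfun x d) (bigfun_mem_l1 x hx d)
  map_add' d d' := by
    apply Subtype.ext
    show bigfun x (d + d') = bigfun x d + bigfun x d'
    unfold bigfun
    rw [← Finset.sum_add_distrib]
    refine Finset.sum_congr rfl fun i _ => ?_
    have h1 : (⇑((d + d').1 i) : M → ℂ) = ⇑(d.1 i) + ⇑(d'.1 i) := lp.coeFn_add _ _
    rw [h1, conv_add_left (coe_mem_l1 (d.1 i)) (coe_mem_l1 (d'.1 i)) (hx i)]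
    have h2 : (d + d').2 i = d.2 i + d'.2 i := rfl
    rw [h2, add_smul]
    abel
  map_smul' c d := by
    apply Subtype.ext
    show bigfun x (c • d) = c • bigfun x d
    unfold bigfun
    rw [Finset.smul_sum]
    refine Finset.sum_congr rfl fun i _ => ?_
    have h1 : (⇑((c • d).1 i) : M → ℂ) = c • ⇑(d.1 i) := lp.coeFn_smul _ _
    rw [h1, conv_smul_left]
    have h2 : (c • d).2 i = c * d.2 i := rfl
    rw [h2, smul_add, mul_smul]

lemma tsum_norm_smul (c : ℂ) (f : M → ℂ) : ∑' u, ‖(c • f) u‖ = ‖c‖ * ∑' u, ‖f u‖ := by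
  rw [← tsum_mul_left]
  refine tsum_congr fun u => ?_
  simp [norm_smul]

lemma tsum_norm_finsum_le {ι : Type*} (s : Finset ι) (h : ι → (M → ℂ)) (hh : ∀ i ∈ s, h i ∈ l1) :
    ∑' u, ‖(∑ i ∈ s, h i) u‖ ≤ ∑ i ∈ s, ∑' u, ‖h i u‖ := by
  classical
  induction s using Finset.induction_on with
  | empty => simp
  | @insert a s' ha ih =>
    rw [Finset.sum_insert ha, Finset.sum_insert ha]
    calc ∑' u, ‖(h a + ∑ i ∈ s', h i) u‖
        ≤ (∑' u, ‖h a u‖) + ∑' u, ‖(∑ i ∈ s', h i) u‖ :=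
          tsum_norm_add_le (hh a (Finset.mem_insert_self a s'))
            (l1_sum s' h fun i hi => hh i (Finset.mem_insert_of_mem hi))
      _ ≤ _ := by
          have := ih fun i hi => hh i (Finset.mem_insert_of_mem hi)
          linarith

lemma T0lin_bound (hx : ∀ i, x i ∈ l1) (d : (Fin n → EM M) × (Fin n → ℂ)) :
    ‖T0lin x hx d‖ ≤ (∑ i, 2 * ∑' u, ‖x i u‖) * ‖d‖ := by
  have h0 : ‖T0lin x hx d‖ = ∑' u, ‖bigfun x d u‖ := norm_E _
  rw [h0]
  calc ∑' u, ‖bigfun x d u‖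
      ≤ ∑ i, ∑' u, ‖(conv (⇑(d.1 i)) (x i) + d.2 i • x i) u‖ :=
        tsum_norm_finsum_le Finset.univ _ fun i _ =>
          l1_add (conv_mem_l1 (coe_mem_l1 (d.1 i)) (hx i)) (l1_smul _ (hx i))
    _ ≤ ∑ i, (2 * ∑' u, ‖x i u‖) * ‖d‖ := by
        refine Finset.sum_le_sum fun i _ => ?_
        have h1 : ∑' u, ‖(conv (⇑(d.1 i)) (x i) + d.2 i • x i) u‖
            ≤ (∑' u, ‖conv (⇑(d.1 i)) (x i) u‖) + ∑' u, ‖(d.2 i • x i) u‖ :=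
          tsum_norm_add_le (conv_mem_l1 (coe_mem_l1 (d.1 i)) (hx i)) (l1_smul _ (hx i))
        have h2 : ∑' u, ‖conv (⇑(d.1 i)) (x i) u‖ ≤ ‖d.1 i‖ * ∑' u, ‖x i u‖ := by
          have := tsum_norm_conv_le (coe_mem_l1 (d.1 i)) (hx i)
          rw [← norm_E] at this
          exact this
        have h3 : ∑' u, ‖(d.2 i • x i) u‖ = ‖d.2 i‖ * ∑' u, ‖x i u‖ := tsum_norm_smul _ _
        have h4 : ‖d.1 i‖ ≤ ‖d‖ := le_trans (norm_le_pi_norm d.1 i) (norm_fst_le d)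
        have h5 : ‖d.2 i‖ ≤ ‖d‖ := le_trans (norm_le_pi_norm d.2 i) (norm_snd_le d)
        have h6 : (0 : ℝ) ≤ ∑' u, ‖x i u‖ := tsum_nonneg fun u => norm_nonneg _
        calc ∑' u, ‖(conv (⇑(d.1 i)) (x i) + d.2 i • x i) u‖
            ≤ ‖d.1 i‖ * (∑' u, ‖x i u‖) + ‖d.2 i‖ * ∑' u, ‖x i u‖ := by linarith
          _ ≤ ‖d‖ * (∑' u, ‖x i u‖) + ‖d‖ * ∑' u, ‖x i u‖ := by
              refine add_le_add (mul_le_mul_of_nonneg_right h4 h6) (mul_le_mul_of_nonneg_right h5 h6)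
          _ = (2 * ∑' u, ‖x i u‖) * ‖d‖ := by ring
    _ = (∑ i, 2 * ∑' u, ‖x i u‖) * ‖d‖ := by rw [Finset.sum_mul]

def T0 (hx : ∀ i, x i ∈ l1) : ((Fin n → EM M) × (Fin n → ℂ)) →L[ℂ] EM M :=
  LinearMap.mkContinuous (T0lin x hx) (∑ i, 2 * ∑' u, ‖x i u‖) (T0lin_bound x hx)

lemma T0_mem_ker (hx : ∀ i, x i ∈ l1) (hx0 : ∀ i, ∑' u, x i u = 0) (d : (Fin n → EM M) × (Fin n → ℂ)) :
    T0 x hx d ∈ Kker M := by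
  show sigmaCLM (T0 x hx d) = 0
  have h0 : sigmaCLM (T0 x hx d) = ∑' u, bigfun x d u := rfl
  rw [h0]
  unfold bigfun
  rw [tsum_congr fun u => Finset.sum_apply u Finset.univ _]
  rw [Summable.tsum_finsetSum (fun i _ => l1_summable
    (l1_add (conv_mem_l1 (coe_mem_l1 (d.1 i)) (hx i)) (l1_smul _ (hx i))))]
  refine Finset.sum_eq_zero fun i _ => ?_
  have h1 : ∑' u, (conv (⇑(d.1 i)) (x i) + d.2 i • x i) u
      = (∑' u, conv (⇑(d.1 i)) (x i) u) + ∑' u, (d.2 i • x i) u :=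
    Summable.tsum_add (l1_summable (conv_mem_l1 (coe_mem_l1 (d.1 i)) (hx i)))
      (l1_summable (l1_smul _ (hx i)))
  rw [h1, tsum_conv (coe_mem_l1 (d.1 i)) (hx i), hx0 i, mul_zero]
  have h2 : ∑' u, (d.2 i • x i) u = d.2 i * ∑' u, x i u := by
    simp only [Pi.smul_apply, smul_eq_mul]
    exact tsum_mul_left
  rw [h2, hx0 i, mul_zero, add_zero]

def Tker (hx : ∀ i, x i ∈ l1) (hx0 : ∀ i, ∑' u, x i u = 0) : ((Fin n → EM M) × (Fin n → ℂ)) →L[ℂ] (Kker M) :=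
  ContinuousLinearMap.codRestrict (T0 x hx) (Kker M) (T0_mem_ker x hx hx0)

lemma Tker_surjective (hx : ∀ i, x i ∈ l1) (hx0 : ∀ i, ∑' u, x i u = 0)
    (hEq : (l10 : Set (M → ℂ)) = {f | ∃ (a : Fin n → (M → ℂ)) (c : Fin n → ℂ),
      (∀ i, a i ∈ l1) ∧ f = ∑ i, (conv (a i) (x i) + c i • x i)}) :
    Function.Surjective (Tker x hx hx0) := by
  intro y
  have hy : (⇑(y : EM M) : M → ℂ) ∈ l10 := by
    refine ⟨coe_mem_l1 _, ?_⟩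
    exact y.2
  rw [hEq] at hy
  obtain ⟨a, c, hal1, heq⟩ := hy
  refine ⟨(fun i => toE (a i) (hal1 i), c), ?_⟩
  apply Subtype.ext
  apply Subtype.ext
  show bigfun x ((fun i => toE (a i) (hal1 i)), c) = ⇑(y : EM M)
  rw [heq]
  rfl

/-- Open mapping: bounded solvability -/
lemma exists_bounded_solution (hx : ∀ i, x i ∈ l1) (hx0 : ∀ i, ∑' u, x i u = 0)
    (hEq : (l10 : Set (M → ℂ)) = {f | ∃ (a : Fin n → (M → ℂ)) (c : Fin n → ℂ),
      (∀ i, a i ∈ l1) ∧ f = ∑ i, (conv (a i) (x i) + c i • x i)}) :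
    ∃ C > 0, ∀ f : M → ℂ, ∀ hf : f ∈ l10,
      ∃ (a : Fin n → (M → ℂ)) (c : Fin n → ℂ), (∀ i, a i ∈ l1) ∧
        f = ∑ i, (conv (a i) (x i) + c i • x i) ∧
        (∀ i, ∑' u, ‖a i u‖ ≤ C * ∑' u, ‖f u‖) ∧ (∀ i, ‖c i‖ ≤ C * ∑' u, ‖f u‖) := by
  obtain ⟨C, hC, hsol⟩ := (Tker x hx hx0).exists_preimage_norm_le (Tker_surjective x hx hx0 hEq)
  refine ⟨C, hC, ?_⟩
  intro f hf
  have hfK : toE f hf.1 ∈ Kker M := by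
    show sigmaCLM (toE f hf.1) = 0
    have h0 : sigmaCLM (toE f hf.1) = ∑' u, f u := rfl
    rw [h0, hf.2]
  obtain ⟨d, hd1, hd2⟩ := hsol ⟨toE f hf.1, hfK⟩
  refine ⟨fun i => ⇑(d.1 i), d.2, fun i => coe_mem_l1 _, ?_, ?_, ?_⟩
  · -- f = bigfun x d
    have h1 : ((Tker x hx hx0 d : Kker M) : EM M) = toE f hf.1 := by rw [hd1]
    have h2 : bigfun x d = f := by
      have := congrArg (fun (w : EM M) => (⇑w : M → ℂ)) h1
      exact this
    rw [← h2]
    rfl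
  · intro i
    have h3 : ‖d.1 i‖ ≤ ‖d‖ := le_trans (norm_le_pi_norm d.1 i) (norm_fst_le d)
    have h4 : ‖(⟨toE f hf.1, hfK⟩ : Kker M)‖ = ∑' u, ‖f u‖ := by
      have h5 : ‖(⟨toE f hf.1, hfK⟩ : Kker M)‖ = ‖toE f hf.1‖ := rfl
      rw [h5, norm_E]
      rfl
    exact le_trans (le_of_eq (norm_E (d.1 i)).symm)
      (le_trans h3 (by rw [← h4]; exact hd2))
  · intro i
    have h3 : ‖d.2 i‖ ≤ ‖d‖ := le_trans (norm_le_pi_norm d.2 i) (norm_snd_le d)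
    have h4 : ‖(⟨toE f hf.1, hfK⟩ : Kker M)‖ = ∑' u, ‖f u‖ := by
      have h5 : ‖(⟨toE f hf.1, hfK⟩ : Kker M)‖ = ‖toE f hf.1‖ := rfl
      rw [h5, norm_E]
      rfl
    calc ‖d.2 i‖ ≤ ‖d‖ := h3
      _ ≤ C * ∑' u, ‖f u‖ := by rw [← h4]; exact hd2

end T



variable [Monoid M]

section pairing

lemma pair_summable (w : M → ℝ) {W : ℝ} (hW : ∀ v, |w v| ≤ W) {f : M → ℂ} (hf : f ∈ l1) :
    Summable fun v => f v * (w v : ℂ) := by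
  refine Summable.of_norm ?_
  refine Summable.of_nonneg_of_le (fun v => norm_nonneg _) (fun v => ?_) (hf.mul_right W)
  rw [norm_mul, Complex.norm_real]
  exact mul_le_mul_of_nonneg_left (hW v) (norm_nonneg _)

lemma summable_weighted_pairs {W : ℝ} {f g : M → ℂ} (hf : f ∈ l1) (hg : g ∈ l1)
    (w' : M × M → ℝ) (hw' : ∀ p, |w' p| ≤ W) :
    Summable fun p : M × M => ‖f p.1 * g p.2 * (w' p : ℂ)‖ := by
  refine Summable.of_nonneg_of_le (fun p => norm_nonneg _) (fun p => ?_)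
    ((summable_mul_norm hf hg).mul_right W)
  rw [norm_mul, Complex.norm_real]
  exact mul_le_mul_of_nonneg_left (hw' p) (norm_nonneg _)

/-- weighted regrouping of the convolution pairing -/
lemma pair_conv_eq (w : M → ℝ) {W : ℝ} (hW : ∀ v, |w v| ≤ W) {f g : M → ℂ}
    (hf : f ∈ l1) (hg : g ∈ l1) :
    ∑' v, conv f g v * (w v : ℂ) = ∑' p : M × M, f p.1 * g p.2 * (w (p.1 * p.2) : ℂ) := by
  have hG : Summable fun p : M × M => ‖f p.1 * g p.2 * (w (p.1 * p.2) : ℂ)‖ :=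
    summable_weighted_pairs hf hg (fun p => w (p.1 * p.2)) (fun p => hW _)
  rw [← tsum_fiber_tsum hG]
  refine tsum_congr fun v => ?_
  simp only [conv]
  rw [← tsum_mul_right]
  refine tsum_congr fun p => ?_
  rw [p.2]

/-- factorization when the weight only depends on the first coordinate -/
lemma pair_fst_eq (w : M → ℝ) {W : ℝ} (hW : ∀ v, |w v| ≤ W) {f g : M → ℂ}
    (hf : f ∈ l1) (hg : g ∈ l1) :
    ∑' p : M × M, f p.1 * g p.2 * (w p.1 : ℂ)
      = (∑' s, f s * (w s : ℂ)) * ∑' t, g t := by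
  have hG : Summable fun p : M × M => f p.1 * g p.2 * (w p.1 : ℂ) :=
    (summable_weighted_pairs hf hg (fun p => w p.1) (fun p => hW _)).of_norm
  rw [Summable.tsum_prod' hG (fun s => ((l1_summable hg).mul_left (f s * (w s : ℂ))).congr
    (fun t => by ring))]
  rw [← tsum_mul_right]
  refine tsum_congr fun s => ?_
  rw [← Summable.tsum_mul_left _ (l1_summable hg)]
  refine tsum_congr fun t => ?_
  ring

end pairing


section phibounds

variable (X : Finset M) (K : ℕ)

/-- the weight profile -/
def Dw (X : Finset M) (K : ℕ) (t : M) : ℝ := if t ∈ X then 1 else K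

lemma Dw_nonneg (t : M) : 0 ≤ Dw X K t := by
  unfold Dw; split <;> positivity

lemma Dw_le (t : M) : Dw X K t ≤ max 1 (K : ℝ) := by
  unfold Dw; split
  · exact le_max_left _ _
  · exact le_max_right _ _

lemma summable_xD {x : M → ℂ} (hx : x ∈ l1) : Summable fun t => ‖x t‖ * Dw X K t := by
  refine Summable.of_nonneg_of_le (fun t => mul_nonneg (norm_nonneg _) (Dw_nonneg X K t))
    (fun t => ?_) (hx.mul_right (max 1 (K : ℝ)))
  exact mul_le_mul_of_nonneg_left (Dw_le X K t) (norm_nonneg _)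

lemma xD_split {x : M → ℂ} (hx : x ∈ l1) :
    ∑' t, ‖x t‖ * Dw X K t ≤ (∑' t, ‖x t‖) + K * ∑' t : {t : M // t ∉ X}, ‖x (t : M)‖ := by
  have h0 := (Summable.sum_add_tsum_subtype_compl (summable_xD X K hx) X).symm
  rw [h0]
  have h1 : ∑ t ∈ X, ‖x t‖ * Dw X K t = ∑ t ∈ X, ‖x t‖ := by
    refine Finset.sum_congr rfl fun t ht => ?_
    unfold Dw; rw [if_pos ht, mul_one]
  have h2 : ∑' t : {t : M // t ∉ X}, ‖x (t : M)‖ * Dw X K (t : M)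
      = K * ∑' t : {t : M // t ∉ X}, ‖x (t : M)‖ := by
    rw [← tsum_mul_left]
    refine tsum_congr fun t => ?_
    unfold Dw; rw [if_neg t.2]; ring
  rw [h1, h2]
  have h3 : ∑ t ∈ X, ‖x t‖ ≤ ∑' t, ‖x t‖ :=
    Summable.sum_le_tsum X (fun t _ => norm_nonneg _) hx
  linarith

lemma hW_psi : ∀ v, |psi X K v| ≤ (K : ℝ) := fun v => by
  rw [abs_of_nonneg (psi_nonneg X K v)]; exact psi_le X K v

lemma phi_conv_bound {a x : M → ℂ} (ha : a ∈ l1) (hx : x ∈ l1) (hx0 : ∑' t, x t = 0) :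
    ‖∑' v, conv a x v * (psi X K v : ℂ)‖
      ≤ (∑' s, ‖a s‖) * ((∑' t, ‖x t‖) + K * ∑' t : {t : M // t ∉ X}, ‖x (t : M)‖) := by
  have hW := hW_psi X K
  have h1 := pair_conv_eq (psi X K) hW ha hx
  have h2 : ∑' p : M × M, a p.1 * x p.2 * (psi X K p.1 : ℂ) = 0 := by
    rw [pair_fst_eq (psi X K) hW ha hx, hx0, mul_zero]
  have hs1 : Summable fun p : M × M => a p.1 * x p.2 * (psi X K (p.1 * p.2) : ℂ) :=
    (summable_weighted_pairs ha hx (fun p => psi X K (p.1 * p.2)) (fun p => hW _)).of_norm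
  have hs2 : Summable fun p : M × M => a p.1 * x p.2 * (psi X K p.1 : ℂ) :=
    (summable_weighted_pairs ha hx (fun p => psi X K p.1) (fun p => hW _)).of_norm
  have h3 : ∑' v, conv a x v * (psi X K v : ℂ)
      = ∑' p : M × M, (a p.1 * x p.2 * (psi X K (p.1 * p.2) : ℂ)
          - a p.1 * x p.2 * (psi X K p.1 : ℂ)) := by
    rw [Summable.tsum_sub hs1 hs2, h2, sub_zero, h1]
  rw [h3]
  have hmaj : Summable fun p : M × M => ‖a p.1‖ * (‖x p.2‖ * Dw X K p.2) :=
    ha.mul_of_nonneg (summable_xD X K hx) (fun s => norm_nonneg _)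
      (fun t => mul_nonneg (norm_nonneg _) (Dw_nonneg X K t))
  have hpoint : ∀ p : M × M,
      ‖a p.1 * x p.2 * (psi X K (p.1 * p.2) : ℂ) - a p.1 * x p.2 * (psi X K p.1 : ℂ)‖
        ≤ ‖a p.1‖ * (‖x p.2‖ * Dw X K p.2) := by
    intro p
    have e1 : a p.1 * x p.2 * (psi X K (p.1 * p.2) : ℂ) - a p.1 * x p.2 * (psi X K p.1 : ℂ)
        = a p.1 * x p.2 * ((psi X K (p.1 * p.2) - psi X K p.1 : ℝ) : ℂ) := by
      push_cast; ring
    rw [e1, norm_mul, norm_mul, Complex.norm_real, mul_assoc]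
    refine mul_le_mul_of_nonneg_left ?_ (norm_nonneg _)
    refine mul_le_mul_of_nonneg_left ?_ (norm_nonneg _)
    unfold Dw
    split
    · rename_i h; exact abs_psi_mul_sub h
    · exact abs_psi_sub_le_K _ _
  have hnormsum : Summable fun p : M × M =>
      ‖a p.1 * x p.2 * (psi X K (p.1 * p.2) : ℂ) - a p.1 * x p.2 * (psi X K p.1 : ℂ)‖ :=
    Summable.of_nonneg_of_le (fun p => norm_nonneg _) hpoint hmaj
  calc ‖∑' p : M × M, (a p.1 * x p.2 * (psi X K (p.1 * p.2) : ℂ)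
          - a p.1 * x p.2 * (psi X K p.1 : ℂ))‖
      ≤ ∑' p : M × M, ‖a p.1 * x p.2 * (psi X K (p.1 * p.2) : ℂ)
          - a p.1 * x p.2 * (psi X K p.1 : ℂ)‖ := norm_tsum_le_tsum_norm hnormsum
    _ ≤ ∑' p : M × M, ‖a p.1‖ * (‖x p.2‖ * Dw X K p.2) :=
        Summable.tsum_le_tsum hpoint hnormsum hmaj
    _ = (∑' s, ‖a s‖) * ∑' t, ‖x t‖ * Dw X K t := by
        have hf' : Summable fun s => ‖(‖a s‖)‖ := by simp only [norm_norm]; exact ha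
        have hg' : Summable fun t => ‖(‖x t‖ * Dw X K t)‖ := by
          have := summable_xD X K hx
          refine this.abs.congr fun t => ?_
          rw [Real.norm_eq_abs]
        exact (tsum_mul_tsum_of_summable_norm hf' hg').symm
    _ ≤ (∑' s, ‖a s‖) * ((∑' t, ‖x t‖) + K * ∑' t : {t : M // t ∉ X}, ‖x (t : M)‖) := by
        refine mul_le_mul_of_nonneg_left (xD_split X K hx) (tsum_nonneg fun s => norm_nonneg _)

lemma phi_single_bound {x : M → ℂ} (hx : x ∈ l1) :
    ‖∑' t, x t * (psi X K t : ℂ)‖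
      ≤ (∑' t, ‖x t‖) + K * ∑' t : {t : M // t ∉ X}, ‖x (t : M)‖ := by
  have hW := hW_psi X K
  have hs : Summable fun t => ‖x t * (psi X K t : ℂ)‖ := by
    refine Summable.of_nonneg_of_le (fun t => norm_nonneg _) (fun t => ?_) (hx.mul_right (K:ℝ))
    rw [norm_mul, Complex.norm_real]
    exact mul_le_mul_of_nonneg_left (hW t) (norm_nonneg _)
  have hpoint : ∀ t, ‖x t * (psi X K t : ℂ)‖ ≤ ‖x t‖ * Dw X K t := by
    intro t
    rw [norm_mul, Complex.norm_real]
    refine mul_le_mul_of_nonneg_left ?_ (norm_nonneg _)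
    rw [Real.norm_eq_abs, abs_of_nonneg (psi_nonneg X K t)]
    unfold Dw
    split
    · rename_i h; exact psi_mem_X_le_one h
    · exact psi_le X K t
  calc ‖∑' t, x t * (psi X K t : ℂ)‖ ≤ ∑' t, ‖x t * (psi X K t : ℂ)‖ :=
        norm_tsum_le_tsum_norm hs
    _ ≤ ∑' t, ‖x t‖ * Dw X K t := Summable.tsum_le_tsum hpoint hs (summable_xD X K hx)
    _ ≤ _ := xD_split X K hx

end phibounds



variable [Monoid M]

-- new small lemmas

lemma xi_mem_l10 {n : ℕ} (x : Fin n → (M → ℂ)) (hx : ∀ i, x i ∈ l1)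
    (hEq : (l10 : Set (M → ℂ)) = {f | ∃ (a : Fin n → (M → ℂ)) (c : Fin n → ℂ),
      (∀ i, a i ∈ l1) ∧ f = ∑ i, (conv (a i) (x i) + c i • x i)}) (i : Fin n) :
    x i ∈ l10 := by
  rw [hEq]
  refine ⟨fun _ => 0, Pi.single i 1, fun _ => l1_zero, ?_⟩
  rw [Finset.sum_congr rfl (fun j _ => by rw [conv_zero_left, zero_add])]
  rw [Finset.sum_eq_single i]
  · simp
  · intro j _ hj
    rw [Pi.single_eq_of_ne hj, zero_smul]
  · intro h; exact absurd (Finset.mem_univ i) h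

lemma tail_mono {f : M → ℝ} (hf : Summable f) (hnn : ∀ t, 0 ≤ f t) {S X : Finset M}
    (hSX : S ⊆ X) :
    ∑' t : {t : M // t ∉ X}, f (t : M) ≤ ∑' t : {t : M // t ∉ S}, f (t : M) := by
  have h1 := Summable.sum_add_tsum_subtype_compl hf S
  have h2 := Summable.sum_add_tsum_subtype_compl hf X
  have h3 : ∑ t ∈ S, f t ≤ ∑ t ∈ X, f t :=
    Finset.sum_le_sum_of_subset_of_nonneg hSX (fun t _ _ => hnn t)
  linarith

lemma tsum_norm_dd_sub_le (u v : M) : ∑' s, ‖(dd u - dd v : M → ℂ) s‖ ≤ 2 := by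
  have h1 : (dd u - dd v : M → ℂ) = dd u + (-1 : ℂ) • dd v := by funext s; simp; ring
  rw [h1]
  calc ∑' s, ‖(dd u + (-1 : ℂ) • dd v) s‖
      ≤ (∑' s, ‖dd u s‖) + ∑' s, ‖((-1 : ℂ) • dd v) s‖ :=
        tsum_norm_add_le (dd_mem_l1 u) (l1_smul _ (dd_mem_l1 v))
    _ ≤ 2 := by
        rw [tsum_norm_dd, tsum_norm_smul, tsum_norm_dd]
        norm_num

lemma phi_dd_sub (X : Finset M) (K : ℕ) (u : M) :
    ∑' v, (dd u - dd 1 : M → ℂ) v * (psi X K v : ℂ) = ((psi X K u : ℝ) : ℂ) := by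
  have hs1 : Summable fun v => dd u v * (psi X K v : ℂ) := by
    apply summable_of_ne_finset_zero (s := {u})
    intro b hb
    simp only [Finset.mem_singleton] at hb
    rw [dd_apply, if_neg hb, zero_mul]
  have hs2 : Summable fun v => dd 1 v * (psi X K v : ℂ) := by
    apply summable_of_ne_finset_zero (s := {(1 : M)})
    intro b hb
    simp only [Finset.mem_singleton] at hb
    rw [dd_apply, if_neg hb, zero_mul]
  have hsplit : ∀ v : M, (dd u - dd 1 : M → ℂ) v * (psi X K v : ℂ)
      = dd u v * (psi X K v : ℂ) - dd 1 v * (psi X K v : ℂ) := by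
    intro v; simp only [Pi.sub_apply]; ring
  rw [tsum_congr hsplit, Summable.tsum_sub hs1 hs2]
  have he1 : ∑' v, dd u v * (psi X K v : ℂ) = ((psi X K u : ℝ) : ℂ) := by
    rw [tsum_eq_single u]
    · rw [dd_apply, if_pos rfl, one_mul]
    · intro b hb; rw [dd_apply, if_neg hb, zero_mul]
  have he2 : ∑' v, dd 1 v * (psi X K v : ℂ) = 0 := by
    rw [tsum_eq_single 1]
    · rw [dd_apply, if_pos rfl, one_mul, psi_one]; simp
    · intro b hb; rw [dd_apply, if_neg hb, zero_mul]
  rw [he1, he2, sub_zero]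

theorem hard_dir (hfg : IsFinGenLeftIdealOf (l10 : Set (M → ℂ))) : PseudoFinite M := by
  classical
  obtain ⟨n, x, hx, hEq⟩ := hfg
  have hx10 : ∀ i, x i ∈ l10 := xi_mem_l10 x hx hEq
  have hx0 : ∀ i, ∑' u, x i u = 0 := fun i => (hx10 i).2
  obtain ⟨C, hC, hsol⟩ := exists_bounded_solution x hx hx0 hEq
  -- constants
  set Btot : ℝ := ∑ i, ∑' u, ‖x i u‖ with hBtot
  have hBtot0 : 0 ≤ Btot :=
    Finset.sum_nonneg fun i _ => tsum_nonneg fun u => norm_nonneg _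
  set K : ℕ := ⌈8 * C * Btot⌉₊ + 1 with hK
  have hKgt : 8 * C * Btot < (K : ℝ) := by
    have := Nat.le_ceil (8 * C * Btot)
    have h2 : ((⌈8 * C * Btot⌉₊ : ℕ) : ℝ) < (K : ℝ) := by
      rw [hK]; push_cast; linarith
    linarith
  have hK0 : (0 : ℝ) ≤ (K : ℝ) := Nat.cast_nonneg _
  set ε : ℝ := 1 / (8 * C * (n + 1)) with hε
  have hεpos : 0 < ε := by
    rw [hε]; positivity
  -- choose truncation sets
  have htail : ∀ i : Fin n, ∃ S : Finset M, ∑' t : {t : M // t ∉ S}, ‖x i (t : M)‖ < ε := by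
    intro i
    have h0 := tendsto_tsum_compl_atTop_zero (fun t : M => ‖x i t‖)
    have h1 : ∀ᶠ s : Finset M in Filter.atTop,
        (∑' t : {t : M // t ∉ s}, ‖x i (t : M)‖) ∈ Set.Iio ε :=
      h0.eventually (Iio_mem_nhds hεpos)
    obtain ⟨S, hS⟩ := h1.exists
    exact ⟨S, hS⟩
  choose S hS using htail
  set X : Finset M := Finset.univ.biUnion S with hXdef
  have htailX : ∀ i, ∑' t : {t : M // t ∉ X}, ‖x i (t : M)‖ ≤ ε := by
    intro i
    refine le_trans (tail_mono (hx i) (fun t => norm_nonneg _) ?_) (le_of_lt (hS i))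
    intro t ht
    exact Finset.mem_biUnion.2 ⟨i, Finset.mem_univ i, ht⟩
  -- main bound for each u
  have main : ∀ u : M, psi X K u < (K : ℝ) := by
    intro u
    set f0 : M → ℂ := dd u - dd 1 with hf0def
    have hf0 : f0 ∈ l10 := dd_sub_dd_mem_l10 u 1
    obtain ⟨a, c, hal1, heq, hanorm, hcnorm⟩ := hsol f0 hf0
    have hf0norm : ∑' v, ‖f0 v‖ ≤ 2 := tsum_norm_dd_sub_le u 1
    have ha2 : ∀ i, ∑' s, ‖a i s‖ ≤ 2 * C := by
      intro i
      calc ∑' s, ‖a i s‖ ≤ C * ∑' v, ‖f0 v‖ := hanorm i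
        _ ≤ C * 2 := mul_le_mul_of_nonneg_left hf0norm (le_of_lt hC)
        _ = 2 * C := by ring
    have hc2 : ∀ i, ‖c i‖ ≤ 2 * C := by
      intro i
      calc ‖c i‖ ≤ C * ∑' v, ‖f0 v‖ := hcnorm i
        _ ≤ C * 2 := mul_le_mul_of_nonneg_left hf0norm (le_of_lt hC)
        _ = 2 * C := by ring
    -- pairing identity
    have hw := hW_psi X K
    have hphi : ((psi X K u : ℝ) : ℂ)
        = ∑ i, ((∑' v, conv (a i) (x i) v * (psi X K v : ℂ))
            + c i * ∑' v, x i v * (psi X K v : ℂ)) := by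
      rw [← phi_dd_sub X K u, ← hf0def, heq]
      have h1 : ∀ v : M, (∑ i, (conv (a i) (x i) + c i • x i)) v * (psi X K v : ℂ)
          = ∑ i, ((conv (a i) (x i) v * (psi X K v : ℂ))
              + c i * (x i v * (psi X K v : ℂ))) := by
        intro v
        rw [Finset.sum_apply, Finset.sum_mul]
        refine Finset.sum_congr rfl fun i _ => ?_
        simp only [Pi.add_apply, Pi.smul_apply, smul_eq_mul]
        ring
      have hsummand : ∀ i : Fin n, Summable (fun v =>
          conv (a i) (x i) v * (psi X K v : ℂ) + c i * (x i v * (psi X K v : ℂ))) := fun i =>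
        Summable.add (pair_summable (psi X K) hw (conv_mem_l1 (hal1 i) (hx i)))
          (((pair_summable (psi X K) hw (hx i)).mul_left (c i)).congr (fun v => by ring))
      rw [tsum_congr h1, Summable.tsum_finsetSum (fun i _ => hsummand i)]
      refine Finset.sum_congr rfl fun i _ => ?_
      rw [Summable.tsum_add (pair_summable (psi X K) hw (conv_mem_l1 (hal1 i) (hx i)))
        (((pair_summable (psi X K) hw (hx i)).mul_left (c i)).congr (fun v => by ring))]
      have h2 : ∑' v, c i * (x i v * (psi X K v : ℂ)) = c i * ∑' v, x i v * (psi X K v : ℂ) :=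
        Summable.tsum_mul_left _ (pair_summable (psi X K) hw (hx i))
      rw [h2]
    -- bound
    have hterm : ∀ i : Fin n, ‖(∑' v, conv (a i) (x i) v * (psi X K v : ℂ))
        + c i * ∑' v, x i v * (psi X K v : ℂ)‖
          ≤ 4 * C * ((∑' t, ‖x i t‖) + K * ε) := by
      intro i
      have hBi0 : (0 : ℝ) ≤ ∑' t, ‖x i t‖ := tsum_nonneg fun t => norm_nonneg _
      have hXKe : (∑' t, ‖x i t‖) + (K : ℝ) * ∑' t : {t : M // t ∉ X}, ‖x i (t : M)‖
          ≤ (∑' t, ‖x i t‖) + K * ε := by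
        have := mul_le_mul_of_nonneg_left (htailX i) hK0
        linarith
      have htt0 : (0 : ℝ) ≤ (∑' t, ‖x i t‖) + (K : ℝ) * ∑' t : {t : M // t ∉ X}, ‖x i (t : M)‖ := by
        have : (0:ℝ) ≤ ∑' t : {t : M // t ∉ X}, ‖x i (t : M)‖ := tsum_nonneg fun t => norm_nonneg _
        positivity
      have h1 : ‖∑' v, conv (a i) (x i) v * (psi X K v : ℂ)‖ ≤ 2 * C * ((∑' t, ‖x i t‖) + K * ε) := by
        calc ‖∑' v, conv (a i) (x i) v * (psi X K v : ℂ)‖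
            ≤ (∑' s, ‖a i s‖) * ((∑' t, ‖x i t‖) + K * ∑' t : {t : M // t ∉ X}, ‖x i (t : M)‖) :=
              phi_conv_bound X K (hal1 i) (hx i) (hx0 i)
          _ ≤ (2 * C) * ((∑' t, ‖x i t‖) + K * ε) := by
              refine mul_le_mul (ha2 i) hXKe htt0 (by linarith)
      have h2 : ‖c i * ∑' v, x i v * (psi X K v : ℂ)‖ ≤ 2 * C * ((∑' t, ‖x i t‖) + K * ε) := by
        rw [norm_mul]
        calc ‖c i‖ * ‖∑' v, x i v * (psi X K v : ℂ)‖
            ≤ (2 * C) * ((∑' t, ‖x i t‖) + K * ∑' t : {t : M // t ∉ X}, ‖x i (t : M)‖) := by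
              refine mul_le_mul (hc2 i) (phi_single_bound X K (hx i)) (norm_nonneg _) (by linarith)
          _ ≤ (2 * C) * ((∑' t, ‖x i t‖) + K * ε) := by
              refine mul_le_mul_of_nonneg_left hXKe (by linarith)
      calc ‖(∑' v, conv (a i) (x i) v * (psi X K v : ℂ)) + c i * ∑' v, x i v * (psi X K v : ℂ)‖
          ≤ ‖∑' v, conv (a i) (x i) v * (psi X K v : ℂ)‖ + ‖c i * ∑' v, x i v * (psi X K v : ℂ)‖ :=
            norm_add_le _ _
        _ ≤ 2 * C * ((∑' t, ‖x i t‖) + K * ε) + 2 * C * ((∑' t, ‖x i t‖) + K * ε) := by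
            linarith
        _ = 4 * C * ((∑' t, ‖x i t‖) + K * ε) := by ring
    have hpsi_eq : psi X K u = ‖((psi X K u : ℝ) : ℂ)‖ := by
      rw [Complex.norm_real, Real.norm_eq_abs, abs_of_nonneg (psi_nonneg X K u)]
    have hchain : psi X K u ≤ ∑ i : Fin n, 4 * C * ((∑' t, ‖x i t‖) + K * ε) := by
      rw [hpsi_eq, hphi]
      exact le_trans (norm_sum_le _ _) (Finset.sum_le_sum fun i _ => hterm i)
    have hsum_expand : ∑ i : Fin n, 4 * C * ((∑' t, ‖x i t‖) + K * ε)
        = 4 * C * Btot + n * (4 * C * K * ε) := by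
      calc ∑ i : Fin n, 4 * C * ((∑' t, ‖x i t‖) + K * ε)
          = ∑ i : Fin n, (4 * C * (∑' t, ‖x i t‖) + 4 * C * (K : ℝ) * ε) :=
            Finset.sum_congr rfl fun i _ => by ring
        _ = 4 * C * Btot + n * (4 * C * K * ε) := by
            rw [Finset.sum_add_distrib, ← Finset.mul_sum, ← hBtot, Finset.sum_const,
              Finset.card_univ, Fintype.card_fin, nsmul_eq_mul]
    have h48 : 4 * C * (n : ℝ) * ε ≤ 1 / 2 := by
      rw [hε, mul_one_div]
      rw [div_le_div_iff₀ (by positivity) two_pos]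
      nlinarith [hC]
    have harith1 : (n : ℝ) * (4 * C * K * ε) ≤ (K : ℝ) / 2 := by
      have e1 : (n : ℝ) * (4 * C * (K : ℝ) * ε) = (4 * C * (n : ℝ) * ε) * K := by ring
      rw [e1]
      calc (4 * C * (n : ℝ) * ε) * K ≤ (1 / 2) * K :=
            mul_le_mul_of_nonneg_right h48 hK0
        _ = (K : ℝ) / 2 := by ring
    calc psi X K u ≤ 4 * C * Btot + n * (4 * C * K * ε) := by
          rw [← hsum_expand]; exact hchain
      _ ≤ 4 * C * Btot + K / 2 := by linarith
      _ < (K : ℝ) := by linarith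
  -- conclude pseudo-finiteness
  refine ⟨X, K + 1, fun u => ?_⟩
  obtain ⟨k, hk1, hk2⟩ := psi_eq_dK X K u
  have hkK : k < K := by
    have := main u
    rw [hk1] at this
    exact_mod_cast this
  obtain ⟨m, hm, z, hz⟩ := hk2 hkK
  exact ⟨m, z, by omega, hz⟩


end Stmt9

/-- Theorem 1.5: for a monoid `M`, the augmentation ideal `ℓ¹₀(M)` is finitely generated
as a left ideal of `ℓ¹(M)` if and only if `M` is pseudo-finite. -/
theorem stmt9 {M : Type*} [Monoid M] :
    IsFinGenLeftIdealOf (l10 : Set (M → ℂ)) ↔ PseudoFinite M :=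
  ⟨Stmt9.hard_dir, Stmt9.easy_dir⟩
end
end

section
/- Let τ = (τₙ) be a sequence in [1, ∞). Then the following are equivalent: (a) τ is not tail-preserving; (b) the set { x ∈ ℓ¹(τ) : the sequence (Σ_{j=n+1}^∞ x_j)_{n∈ℕ} belongs to ℓ¹(τ) } is meagre in ℓ¹(τ); (c) there is a sequence of vectors (x⁽ᵏ⁾) of finitely supported sequences with non-negative real terms such that ‖x⁽ᵏ⁾‖_τ ≤ 1 for all k ∈ ℕ and lim_{k→∞} Σ_{n=1}^∞ τₙ |Σ_{j=n+1}^∞ x_j⁽ᵏ⁾| = ∞. -/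
noncomputable section

open Filter

/-- The tail `∑_{j=n+1}^∞ x_j` of a sequence, in 0-indexed form. -/
def tailFrom (x : ℕ → ℂ) (n : ℕ) : ℂ := ∑' j : ℕ, x (n + 1 + j)

/-- A sequence `τ` in `[1,∞)` is tail-preserving if for every complex sequence `x` with
`∑ τₙ|xₙ| < ∞` one has `∑ τₙ|∑_{j>n} x_j| < ∞`.  (0-indexed: `τ n` is the paper's `τ_{n+1}`.) -/
def TailPreserving (τ : ℕ → ℝ) : Prop :=
  ∀ x : ℕ → ℂ, Summable (fun n => τ n * ‖x n‖) →
    Summable (fun n => τ n * ‖tailFrom x n‖)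

/-- The weighted space `ℓ¹(τ)` of complex sequences `x` with `‖x‖_τ = ∑ τₙ|xₙ| < ∞`. -/
def L1tau (τ : ℕ → ℝ) : Type := {x : ℕ → ℂ // Summable fun n => τ n * ‖x n‖}

section metric

variable (τ : ℕ → ℝ)

private lemma l1tau_nonneg (hτ : ∀ n, 1 ≤ τ n) (n : ℕ) (a : ℂ) : 0 ≤ τ n * ‖a‖ :=
  mul_nonneg (zero_le_one.trans (hτ n)) (norm_nonneg _)

private lemma l1tau_sub_summable (hτ : ∀ n, 1 ≤ τ n) (x y : L1tau τ) :
    Summable fun n => τ n * ‖x.1 n - y.1 n‖ := by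
  refine Summable.of_nonneg_of_le (fun n => l1tau_nonneg τ hτ n _) (fun n => ?_) (x.2.add y.2)
  calc τ n * ‖x.1 n - y.1 n‖ ≤ τ n * (‖x.1 n‖ + ‖y.1 n‖) :=
        mul_le_mul_of_nonneg_left (norm_sub_le _ _) (zero_le_one.trans (hτ n))
    _ = τ n * ‖x.1 n‖ + τ n * ‖y.1 n‖ := mul_add _ _ _

/-- The metric of `ℓ¹(τ)`, given by `dist x y = ∑ τₙ |xₙ - yₙ| = ‖x - y‖_τ`. -/
def l1tauMetric (hτ : ∀ n, 1 ≤ τ n) : MetricSpace (L1tau τ) where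
  dist x y := ∑' n, τ n * ‖x.1 n - y.1 n‖
  dist_self x := by simp
  dist_comm x y := tsum_congr fun n => by rw [norm_sub_rev]
  dist_triangle x y z := by
    have h1 := l1tau_sub_summable τ hτ x y
    have h2 := l1tau_sub_summable τ hτ y z
    calc ∑' n, τ n * ‖x.1 n - z.1 n‖
        ≤ ∑' n, (τ n * ‖x.1 n - y.1 n‖ + τ n * ‖y.1 n - z.1 n‖) := by
          refine Summable.tsum_le_tsum (fun n => ?_) (l1tau_sub_summable τ hτ x z) (h1.add h2)
          calc τ n * ‖x.1 n - z.1 n‖ ≤ τ n * (‖x.1 n - y.1 n‖ + ‖y.1 n - z.1 n‖) := by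
                refine mul_le_mul_of_nonneg_left ?_ (zero_le_one.trans (hτ n))
                simpa using norm_sub_le_norm_sub_add_norm_sub (x.1 n) (y.1 n) (z.1 n)
            _ = τ n * ‖x.1 n - y.1 n‖ + τ n * ‖y.1 n - z.1 n‖ := mul_add _ _ _
      _ = (∑' n, τ n * ‖x.1 n - y.1 n‖) + ∑' n, τ n * ‖y.1 n - z.1 n‖ := Summable.tsum_add h1 h2
  eq_of_dist_eq_zero := by
    intro x y h
    apply Subtype.ext
    funext n
    have hle := Summable.le_tsum (l1tau_sub_summable τ hτ x y) n
      (fun j _ => l1tau_nonneg τ hτ j _)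
    have h' : (∑' i : ℕ, τ i * ‖x.1 i - y.1 i‖) = 0 := h
    rw [h'] at hle
    have h0 : τ n * ‖x.1 n - y.1 n‖ = 0 := le_antisymm hle (l1tau_nonneg τ hτ n _)
    have hnorm : ‖x.1 n - y.1 n‖ = 0 := by
      rcases mul_eq_zero.mp h0 with h' | h'
      · exact absurd h' (by have := hτ n; positivity)
      · exact h'
    exact sub_eq_zero.mp (norm_eq_zero.mp hnorm)

end metric


section auxlemmas

open Filter Function

variable (τ : ℕ → ℝ)

private lemma hτ0' (hτ : ∀ n, 1 ≤ τ n) (n : ℕ) : (0:ℝ) ≤ τ n := zero_le_one.trans (hτ n)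

private lemma aux_norm_summable (hτ : ∀ n, 1 ≤ τ n) {x : ℕ → ℂ}
    (hx : Summable fun n => τ n * ‖x n‖) : Summable fun n => ‖x n‖ :=
  hx.of_nonneg_of_le (fun n => norm_nonneg _)
    (fun n => le_mul_of_one_le_left (norm_nonneg _) (hτ n))

private lemma aux_tail_summable {x : ℕ → ℂ} (hx : Summable fun n => ‖x n‖) (n : ℕ) :
    Summable fun j => ‖x (n + 1 + j)‖ :=
  hx.comp_injective (add_right_injective (n + 1))

private lemma aux_tail_summable' {x : ℕ → ℂ} (hx : Summable fun n => ‖x n‖) (n : ℕ) :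
    Summable fun j => x (n + 1 + j) :=
  hx.of_norm.comp_injective (add_right_injective (n + 1))

/-- If the partial sums of `τ` are dominated by `C * τ`, then `τ` is tail-preserving. -/
private lemma aux_tp_of_bdd (hτ : ∀ n, 1 ≤ τ n) (C : ℝ)
    (hC : ∀ j, ∑ n ∈ Finset.range j, τ n ≤ C * τ j) : TailPreserving τ := by
  intro x hx
  have hτ0 : ∀ n, (0:ℝ) ≤ τ n := hτ0' τ hτ
  have hxn : Summable fun n => ‖x n‖ := aux_norm_summable τ hτ hx
  set G : ℕ × ℕ → ℝ := fun p => if p.2 < p.1 then τ p.2 * ‖x p.1‖ else 0 with hGdef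
  have hGnn : 0 ≤ G := by
    intro p
    show (0:ℝ) ≤ if p.2 < p.1 then τ p.2 * ‖x p.1‖ else 0
    split
    · exact mul_nonneg (hτ0 _) (norm_nonneg _)
    · exact le_refl 0
  have hGslice : ∀ j, Summable fun m => G (j, m) := fun j =>
    summable_of_ne_finset_zero (s := Finset.range j) (fun m hm => by
      have h : ¬ m < j := fun h => hm (Finset.mem_range.mpr h)
      simp [hGdef, h])
  have hGslicesum : ∀ j, ∑' m, G (j, m) ≤ C * (τ j * ‖x j‖) := by
    intro j
    have h1 : ∑' m, G (j, m) = ∑ m ∈ Finset.range j, τ m * ‖x j‖ := by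
      rw [tsum_eq_sum (s := Finset.range j) (fun m hm => by
        have h : ¬ m < j := fun h => hm (Finset.mem_range.mpr h)
        simp [hGdef, h])]
      exact Finset.sum_congr rfl (fun m hm => by simp [hGdef, Finset.mem_range.mp hm])
    rw [h1, ← Finset.sum_mul]
    calc (∑ m ∈ Finset.range j, τ m) * ‖x j‖ ≤ (C * τ j) * ‖x j‖ :=
          mul_le_mul_of_nonneg_right (hC j) (norm_nonneg _)
      _ = C * (τ j * ‖x j‖) := by ring
  have hG : Summable G := by
    refine (summable_prod_of_nonneg hGnn).2 ⟨hGslice, ?_⟩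
    exact Summable.of_nonneg_of_le (fun j => tsum_nonneg fun m => hGnn (j, m))
      hGslicesum (hx.mul_left C)
  set F : ℕ × ℕ → ℝ := fun q => τ q.1 * ‖x (q.1 + 1 + q.2)‖ with hFdef
  have hFnn : 0 ≤ F := fun q => mul_nonneg (hτ0 _) (norm_nonneg _)
  have hinj : Function.Injective (fun q : ℕ × ℕ => ((q.1 + 1 + q.2, q.1) : ℕ × ℕ)) := by
    intro a b h
    simp only [Prod.mk.injEq] at h
    obtain ⟨h1, h2⟩ := h
    exact Prod.ext h2 (by omega)
  have hF : Summable F := by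
    refine (hG.comp_injective hinj).congr fun q => ?_
    show G (q.1 + 1 + q.2, q.1) = F q
    simp only [hFdef, hGdef]
    rw [if_pos (by omega)]
  have hmaj : Summable fun n => ∑' m, F (n, m) := ((summable_prod_of_nonneg hFnn).1 hF).2
  refine Summable.of_nonneg_of_le (fun n => mul_nonneg (hτ0 n) (norm_nonneg _))
    (fun n => ?_) hmaj
  calc τ n * ‖tailFrom x n‖ ≤ τ n * ∑' j, ‖x (n + 1 + j)‖ := by
        refine mul_le_mul_of_nonneg_left ?_ (hτ0 n)
        simp only [tailFrom]
        exact norm_tsum_le_tsum_norm (aux_tail_summable hxn n)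
    _ = ∑' m, F (n, m) := by simp only [hFdef]; exact tsum_mul_left.symm

private def basisVec (j : ℕ) : ℕ → ℂ := fun m => if m = j then ((τ j)⁻¹ : ℝ) else 0

private lemma basisVec_tail (j n : ℕ) :
    tailFrom (basisVec τ j) n = if n < j then (((τ j)⁻¹ : ℝ) : ℂ) else 0 := by
  unfold tailFrom basisVec
  by_cases h : n < j
  · rw [if_pos h, tsum_eq_single (j - (n + 1)) (fun i hi => if_neg (by omega))]
    rw [if_pos (by omega)]
  · rw [if_neg h]
    convert tsum_zero with i
    exact if_neg (by omega)

private lemma basisVec_tail_tsum (hτ : ∀ n, 1 ≤ τ n) (j : ℕ) :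
    ∑' n, τ n * ‖tailFrom (basisVec τ j) n‖ = (∑ n ∈ Finset.range j, τ n) * (τ j)⁻¹ := by
  have h0 : 0 < τ j := lt_of_lt_of_le zero_lt_one (hτ j)
  have key : ∀ n, τ n * ‖tailFrom (basisVec τ j) n‖ = if n < j then τ n * (τ j)⁻¹ else 0 := by
    intro n
    rw [basisVec_tail]
    by_cases h : n < j
    · rw [if_pos h, if_pos h, Complex.norm_real, Real.norm_eq_abs,
        abs_of_nonneg (inv_nonneg.2 h0.le)]
    · rw [if_neg h, if_neg h, norm_zero, mul_zero]
  simp only [key]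
  rw [tsum_eq_sum (s := Finset.range j)
      (fun n hn => if_neg (fun h => hn (Finset.mem_range.mpr h))),
    Finset.sum_congr rfl (fun n hn => if_pos (Finset.mem_range.mp hn)), ← Finset.sum_mul]

private lemma basisVec_norm_tsum (hτ : ∀ n, 1 ≤ τ n) (j : ℕ) :
    ∑' n, τ n * ‖basisVec τ j n‖ = 1 := by
  have h0 : 0 < τ j := lt_of_lt_of_le zero_lt_one (hτ j)
  rw [tsum_eq_single j (fun b hb => by simp [basisVec, hb])]
  have hbj : basisVec τ j j = (((τ j)⁻¹ : ℝ) : ℂ) := if_pos rfl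
  rw [hbj, Complex.norm_real, Real.norm_eq_abs, abs_of_nonneg (inv_nonneg.2 h0.le)]
  exact mul_inv_cancel₀ h0.ne'

private lemma aux_not_tp_imp_c (hτ : ∀ n, 1 ≤ τ n) (h : ¬ TailPreserving τ) :
    ∃ x : ℕ → ℕ → ℂ,
      (∀ k, (Function.support (x k)).Finite) ∧
      (∀ k j, 0 ≤ (x k j).re ∧ (x k j).im = 0) ∧
      (∀ k, ∑' n, τ n * ‖x k n‖ ≤ 1) ∧
      Tendsto (fun k => ∑' n, τ n * ‖tailFrom (x k) n‖) atTop atTop := by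
  have hτ0 : ∀ n, (0:ℝ) ≤ τ n := hτ0' τ hτ
  have hub : ∀ k : ℕ, ∃ j, (k : ℝ) * τ j ≤ ∑ n ∈ Finset.range j, τ n := by
    by_contra hcon
    push_neg at hcon
    obtain ⟨k, hk⟩ := hcon
    exact h (aux_tp_of_bdd τ hτ k (fun j => (hk j).le))
  choose jj hjj using hub
  refine ⟨fun k => basisVec τ (jj k), ?_, ?_, ?_, ?_⟩
  · intro k
    refine Set.Finite.subset (Set.finite_singleton (jj k)) fun m hm => ?_
    simp only [Function.mem_support, basisVec] at hm
    rcases eq_or_ne m (jj k) with h' | h'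
    · simp [h']
    · exact absurd (if_neg h') hm
  · intro k m
    simp only [basisVec]
    split
    · constructor
      · simp only [Complex.ofReal_re]
        exact inv_nonneg.2 (hτ0 _)
      · simp
    · simp
  · exact fun k => le_of_eq (basisVec_norm_tsum τ hτ (jj k))
  · refine tendsto_atTop_mono (fun k => ?_) tendsto_natCast_atTop_atTop
    rw [basisVec_tail_tsum τ hτ]
    have h0 : 0 < τ (jj k) := lt_of_lt_of_le zero_lt_one (hτ (jj k))
    calc (k : ℝ) = ((k : ℝ) * τ (jj k)) * (τ (jj k))⁻¹ := by field_simp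
      _ ≤ _ := mul_le_mul_of_nonneg_right (hjj k) (inv_nonneg.2 h0.le)

private lemma aux_c_imp_meagre (hτ : ∀ n, 1 ≤ τ n)
    (hc : ∃ x : ℕ → ℕ → ℂ,
        (∀ k, (Function.support (x k)).Finite) ∧
        (∀ k j, 0 ≤ (x k j).re ∧ (x k j).im = 0) ∧
        (∀ k, ∑' n, τ n * ‖x k n‖ ≤ 1) ∧
        Tendsto (fun k => ∑' n, τ n * ‖tailFrom (x k) n‖) atTop atTop) :
    @IsMeagre (L1tau τ) (l1tauMetric τ hτ).toUniformSpace.toTopologicalSpace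
      {x : L1tau τ | Summable fun n => τ n * ‖tailFrom x.1 n‖} := by
  letI : MetricSpace (L1tau τ) := l1tauMetric τ hτ
  have hτ0 : ∀ n, (0:ℝ) ≤ τ n := hτ0' τ hτ
  obtain ⟨xs, hfin, _hpos, hnorm1, htend⟩ := hc
  have hdist : ∀ x y : L1tau τ, dist x y = ∑' n, τ n * ‖x.1 n - y.1 n‖ := fun _ _ => rfl
  -- Lipschitz bound for the tails
  have tail_lip : ∀ (x y : L1tau τ) (n : ℕ),
      ‖tailFrom x.1 n - tailFrom y.1 n‖ ≤ dist x y := by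
    intro x y n
    have hx1 : Summable fun m => ‖x.1 m‖ := aux_norm_summable τ hτ x.2
    have hy1 : Summable fun m => ‖y.1 m‖ := aux_norm_summable τ hτ y.2
    have hdsum : Summable fun m => τ m * ‖x.1 m - y.1 m‖ := l1tau_sub_summable τ hτ x y
    have hdn : Summable fun m => ‖x.1 m - y.1 m‖ := aux_norm_summable τ hτ hdsum
    have heq : tailFrom x.1 n - tailFrom y.1 n = ∑' j, (x.1 (n + 1 + j) - y.1 (n + 1 + j)) :=
      (Summable.tsum_sub (aux_tail_summable' hx1 n) (aux_tail_summable' hy1 n)).symm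
    rw [heq, hdist]
    calc ‖∑' j, (x.1 (n + 1 + j) - y.1 (n + 1 + j))‖
        ≤ ∑' j, ‖x.1 (n + 1 + j) - y.1 (n + 1 + j)‖ :=
          norm_tsum_le_tsum_norm (hdn.comp_injective (add_right_injective (n + 1)))
      _ ≤ ∑' m, τ m * ‖x.1 m - y.1 m‖ := by
          refine Summable.tsum_le_tsum_of_inj (fun j => n + 1 + j) (add_right_injective (n + 1))
            (fun m _ => mul_nonneg (hτ0 m) (norm_nonneg _))
            (fun j => le_mul_of_one_le_left (norm_nonneg _) (hτ _))
            (hdn.comp_injective (add_right_injective (n + 1))) hdsum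
  have cont_tail : ∀ n, Continuous fun x : L1tau τ => tailFrom x.1 n := by
    intro n
    refine (LipschitzWith.of_dist_le_mul (K := 1) (fun x y => ?_)).continuous
    rw [Complex.dist_eq, NNReal.coe_one, one_mul]
    exact tail_lip x y n
  set E : ℕ → Set (L1tau τ) :=
    fun M => {x | ∀ N, ∑ n ∈ Finset.range N, τ n * ‖tailFrom x.1 n‖ ≤ M} with hE
  have hEclosed : ∀ M, IsClosed (E M) := by
    intro M
    have h1 : E M = ⋂ N, {x : L1tau τ |
        ∑ n ∈ Finset.range N, τ n * ‖tailFrom x.1 n‖ ≤ M} := by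
      ext x; simp [hE, Set.mem_iInter]
    rw [h1]
    refine isClosed_iInter fun N => isClosed_le ?_ continuous_const
    exact continuous_finset_sum _ fun n _ => continuous_const.mul ((cont_tail n).norm)
  have hEint : ∀ M, interior (E M) = ∅ := by
    intro M
    rw [Set.eq_empty_iff_forall_notMem]
    intro x hx
    have hxE : x ∈ E M := interior_subset hx
    obtain ⟨ε, hε, hball⟩ := Metric.isOpen_iff.1 isOpen_interior x hx
    set c := ε / 2 with hcdef
    have hcpos : 0 < c := half_pos hε
    have hM0 : (0:ℝ) ≤ (M : ℝ) := Nat.cast_nonneg M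
    obtain ⟨k, hk⟩ := (htend.eventually_ge_atTop ((2 * (M : ℝ) + 1) / c)).exists
    obtain ⟨b, hb⟩ := (hfin k).bddAbove
    set B := b + 1 with hBdef
    have hsupp : ∀ m, B ≤ m → xs k m = 0 := by
      intro m hm
      by_contra h
      have := hb (Function.mem_support.mpr h)
      have this : m ≤ b := this
      omega
    have hxs_norm_sum : Summable fun m => τ m * ‖xs k m‖ :=
      summable_of_ne_finset_zero (s := Finset.range B) (fun m hm => by
        rw [hsupp m (by simpa using Finset.mem_range.not.mp hm)]; simp)
    have hxs_n : Summable fun m => ‖xs k m‖ := aux_norm_summable τ hτ hxs_norm_sum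
    have htail0 : ∀ n, B ≤ n → tailFrom (xs k) n = 0 := by
      intro n hn
      unfold tailFrom
      convert tsum_zero with i
      exact hsupp _ (by omega)
    have hLk : ∑ n ∈ Finset.range B, τ n * ‖tailFrom (xs k) n‖
        = ∑' n, τ n * ‖tailFrom (xs k) n‖ :=
      (tsum_eq_sum (s := Finset.range B) (fun n hn => by
        rw [htail0 n (by simpa using Finset.mem_range.not.mp hn), norm_zero, mul_zero])).symm
    have hysum : Summable fun m => τ m * ‖x.1 m + (c : ℂ) * xs k m‖ := by
      refine Summable.of_nonneg_of_le (fun m => mul_nonneg (hτ0 m) (norm_nonneg _))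
        (fun m => ?_) (x.2.add (hxs_norm_sum.mul_left c))
      calc τ m * ‖x.1 m + (c : ℂ) * xs k m‖
          ≤ τ m * (‖x.1 m‖ + ‖(c : ℂ) * xs k m‖) :=
            mul_le_mul_of_nonneg_left (norm_add_le _ _) (hτ0 m)
        _ = τ m * ‖x.1 m‖ + c * (τ m * ‖xs k m‖) := by
            rw [norm_mul, Complex.norm_real, Real.norm_eq_abs, abs_of_nonneg hcpos.le]; ring
    set y : L1tau τ := ⟨fun m => x.1 m + (c : ℂ) * xs k m, hysum⟩ with hy
    have hdisty : dist y x ≤ c := by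
      rw [hdist]
      have h1 : ∀ m, τ m * ‖y.1 m - x.1 m‖ = c * (τ m * ‖xs k m‖) := by
        intro m
        simp only [hy, add_sub_cancel_left]
        rw [norm_mul, Complex.norm_real, Real.norm_eq_abs, abs_of_nonneg hcpos.le]; ring
      calc (∑' m, τ m * ‖y.1 m - x.1 m‖) = ∑' m, c * (τ m * ‖xs k m‖) := tsum_congr h1
        _ = c * ∑' m, τ m * ‖xs k m‖ := tsum_mul_left
        _ ≤ c * 1 := mul_le_mul_of_nonneg_left (hnorm1 k) hcpos.le
        _ = c := mul_one c
    have hyE : y ∈ E M := interior_subset (hball (by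
      rw [Metric.mem_ball]
      calc dist y x ≤ c := hdisty
        _ < ε := by rw [hcdef]; linarith))
    have htaily : ∀ n, tailFrom y.1 n = tailFrom x.1 n + (c : ℂ) * tailFrom (xs k) n := by
      intro n
      have hx1 : Summable fun m => ‖x.1 m‖ := aux_norm_summable τ hτ x.2
      have h1 : Summable fun j => x.1 (n + 1 + j) := aux_tail_summable' hx1 n
      have h2 : Summable fun j => xs k (n + 1 + j) := aux_tail_summable' hxs_n n
      simp only [tailFrom]
      rw [← tsum_mul_left, ← Summable.tsum_add h1 (h2.mul_left _)]
    have hxsfin : Summable fun n => τ n * ‖tailFrom (xs k) n‖ :=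
      summable_of_ne_finset_zero (s := Finset.range B) (fun n hn => by
        rw [htail0 n (by simpa using Finset.mem_range.not.mp hn), norm_zero, mul_zero])
    have hkey : (M : ℝ) < ∑ n ∈ Finset.range B, τ n * ‖tailFrom y.1 n‖ := by
      have h1 : ∀ n, c * ‖tailFrom (xs k) n‖ - ‖tailFrom x.1 n‖ ≤ ‖tailFrom y.1 n‖ := by
        intro n
        rw [htaily n]
        have h := norm_sub_norm_le ((c : ℂ) * tailFrom (xs k) n)
          (tailFrom x.1 n + (c : ℂ) * tailFrom (xs k) n)
        have h2 : ‖(c : ℂ) * tailFrom (xs k) n -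
            (tailFrom x.1 n + (c : ℂ) * tailFrom (xs k) n)‖ = ‖tailFrom x.1 n‖ := by
          rw [show (c : ℂ) * tailFrom (xs k) n -
            (tailFrom x.1 n + (c : ℂ) * tailFrom (xs k) n) = -(tailFrom x.1 n) by ring, norm_neg]
        have h3 : ‖(c : ℂ) * tailFrom (xs k) n‖ = c * ‖tailFrom (xs k) n‖ := by
          rw [norm_mul, Complex.norm_real, Real.norm_eq_abs, abs_of_nonneg hcpos.le]
        rw [h2, h3] at h
        linarith
      have h2 : c * (∑ n ∈ Finset.range B, τ n * ‖tailFrom (xs k) n‖)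
          - (∑ n ∈ Finset.range B, τ n * ‖tailFrom x.1 n‖)
          ≤ ∑ n ∈ Finset.range B, τ n * ‖tailFrom y.1 n‖ := by
        rw [Finset.mul_sum, ← Finset.sum_sub_distrib]
        refine Finset.sum_le_sum fun n _ => ?_
        calc c * (τ n * ‖tailFrom (xs k) n‖) - τ n * ‖tailFrom x.1 n‖
            = τ n * (c * ‖tailFrom (xs k) n‖ - ‖tailFrom x.1 n‖) := by ring
          _ ≤ τ n * ‖tailFrom y.1 n‖ := mul_le_mul_of_nonneg_left (h1 n) (hτ0 n)
      have h3 : ∑ n ∈ Finset.range B, τ n * ‖tailFrom x.1 n‖ ≤ M := hxE B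
      have h4 : 2 * (M : ℝ) + 1 ≤ c * ∑ n ∈ Finset.range B, τ n * ‖tailFrom (xs k) n‖ := by
        rw [hLk]
        calc (2 * (M : ℝ) + 1) = c * ((2 * (M : ℝ) + 1) / c) := by field_simp
          _ ≤ c * ∑' n, τ n * ‖tailFrom (xs k) n‖ :=
              mul_le_mul_of_nonneg_left hk hcpos.le
      linarith
    exact absurd (hyE B) (not_le.mpr hkey)
  have hcover : {x : L1tau τ | Summable fun n => τ n * ‖tailFrom x.1 n‖} ⊆ ⋃ M : ℕ, E M := by
    intro x hx
    refine Set.mem_iUnion.2 ⟨⌈∑' n, τ n * ‖tailFrom x.1 n‖⌉₊, fun N => ?_⟩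
    calc ∑ n ∈ Finset.range N, τ n * ‖tailFrom x.1 n‖
        ≤ ∑' n, τ n * ‖tailFrom x.1 n‖ :=
          Summable.sum_le_tsum _ (fun n _ => mul_nonneg (hτ0 n) (norm_nonneg _)) hx
      _ ≤ _ := Nat.le_ceil _
  refine IsMeagre.mono hcover (isMeagre_iUnion fun M => ?_)
  show (E M)ᶜ ∈ residual _
  exact residual_of_dense_open (hEclosed M).isOpen_compl
    (interior_eq_empty_iff_dense_compl.1 (hEint M))

private lemma aux_complete (hτ : ∀ n, 1 ≤ τ n) :
    @CompleteSpace (L1tau τ) (l1tauMetric τ hτ).toUniformSpace := by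
  letI : MetricSpace (L1tau τ) := l1tauMetric τ hτ
  have hτ0 : ∀ n, (0:ℝ) ≤ τ n := hτ0' τ hτ
  apply Metric.complete_of_cauchySeq_tendsto
  intro u hu
  have hcoord : ∀ m, CauchySeq fun k => (u k).1 m := by
    intro m
    have hl : LipschitzWith 1 (fun x : L1tau τ => x.1 m) := by
      refine LipschitzWith.of_dist_le_mul fun x y => ?_
      rw [Complex.dist_eq, NNReal.coe_one, one_mul]
      calc ‖x.1 m - y.1 m‖ ≤ τ m * ‖x.1 m - y.1 m‖ :=
            le_mul_of_one_le_left (norm_nonneg _) (hτ m)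
        _ ≤ ∑' n, τ n * ‖x.1 n - y.1 n‖ :=
            Summable.le_tsum (l1tau_sub_summable τ hτ x y) m (fun n _ => l1tau_nonneg τ hτ n _)
        _ = dist x y := rfl
    exact hl.uniformContinuous.comp_cauchySeq hu
  have hlim : ∀ m, ∃ z : ℂ, Tendsto (fun k => (u k).1 m) atTop (nhds z) := fun m =>
    cauchySeq_tendsto_of_complete (hcoord m)
  choose z hz using hlim
  have key : ∀ ε : ℝ, 0 < ε → ∃ K, ∀ k, K ≤ k →
      ∀ s : Finset ℕ, ∑ m ∈ s, τ m * ‖(u k).1 m - z m‖ ≤ ε := by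
    intro ε hε
    obtain ⟨K, hK⟩ := Metric.cauchySeq_iff.1 hu ε hε
    refine ⟨K, fun k hk s => ?_⟩
    have htend : Tendsto (fun l => ∑ m ∈ s, τ m * ‖(u k).1 m - (u l).1 m‖) atTop
        (nhds (∑ m ∈ s, τ m * ‖(u k).1 m - z m‖)) := by
      refine tendsto_finset_sum _ fun m _ => ?_
      exact ((tendsto_const_nhds.sub (hz m)).norm).const_mul (τ m)
    refine le_of_tendsto htend (Filter.eventually_atTop.2 ⟨K, fun l hl => ?_⟩)
    calc ∑ m ∈ s, τ m * ‖(u k).1 m - (u l).1 m‖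
        ≤ ∑' m, τ m * ‖(u k).1 m - (u l).1 m‖ :=
          Summable.sum_le_tsum s (fun m _ => mul_nonneg (hτ0 m) (norm_nonneg _))
            (l1tau_sub_summable τ hτ (u k) (u l))
      _ = dist (u k) (u l) := rfl
      _ ≤ ε := (hK k hk l hl).le
  obtain ⟨K1, hK1⟩ := key 1 one_pos
  have hdz : Summable fun m => τ m * ‖(u K1).1 m - z m‖ :=
    summable_of_sum_le (fun m => mul_nonneg (hτ0 m) (norm_nonneg _))
      (fun s => hK1 K1 le_rfl s)
  have hzsum : Summable fun m => τ m * ‖z m‖ := by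
    refine Summable.of_nonneg_of_le (fun m => mul_nonneg (hτ0 m) (norm_nonneg _))
      (fun m => ?_) ((u K1).2.add hdz)
    have h1 : ‖z m‖ ≤ ‖(u K1).1 m‖ + ‖(u K1).1 m - z m‖ := by
      have h2 := norm_sub_le ((u K1).1 m) ((u K1).1 m - z m)
      simpa [sub_sub_cancel] using h2
    calc τ m * ‖z m‖ ≤ τ m * (‖(u K1).1 m‖ + ‖(u K1).1 m - z m‖) :=
          mul_le_mul_of_nonneg_left h1 (hτ0 m)
      _ = τ m * ‖(u K1).1 m‖ + τ m * ‖(u K1).1 m - z m‖ := mul_add _ _ _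
  refine ⟨⟨z, hzsum⟩, Metric.tendsto_atTop.2 fun ε hε => ?_⟩
  obtain ⟨K, hK⟩ := key (ε / 2) (half_pos hε)
  refine ⟨K, fun k hk => ?_⟩
  have hsum : Summable fun m => τ m * ‖(u k).1 m - z m‖ :=
    summable_of_sum_le (fun m => mul_nonneg (hτ0 m) (norm_nonneg _)) (fun s => hK k hk s)
  have hle : dist (u k) ⟨z, hzsum⟩ ≤ ε / 2 := by
    show (∑' m, τ m * ‖(u k).1 m - z m‖) ≤ ε / 2
    exact Summable.tsum_le_of_sum_le hsum (fun s => hK k hk s)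
  linarith

private lemma aux_tp_imp_not_meagre (hτ : ∀ n, 1 ≤ τ n) (h : TailPreserving τ) :
    ¬ @IsMeagre (L1tau τ) (l1tauMetric τ hτ).toUniformSpace.toTopologicalSpace
      {x : L1tau τ | Summable fun n => τ n * ‖tailFrom x.1 n‖} := by
  letI : MetricSpace (L1tau τ) := l1tauMetric τ hτ
  haveI : CompleteSpace (L1tau τ) := aux_complete τ hτ
  haveI : Nonempty (L1tau τ) := ⟨⟨fun _ => 0, by simpa using summable_zero⟩⟩
  intro hm
  have huniv : {x : L1tau τ | Summable fun n => τ n * ‖tailFrom x.1 n‖} = Set.univ := by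
    ext x
    simp only [Set.mem_setOf_eq, Set.mem_univ, iff_true]
    exact h x.1 x.2
  rw [huniv] at hm
  have hd : Dense ((Set.univ : Set (L1tau τ))ᶜ) := dense_of_mem_residual hm
  rw [Set.compl_univ] at hd
  have h1 : closure (∅ : Set (L1tau τ)) = Set.univ := hd.closure_eq
  rw [closure_empty] at h1
  exact Set.empty_ne_univ h1

end auxlemmas

/-- Lemma 5.1: for a sequence `τ = (τₙ)` in `[1,∞)`, the following are equivalent:
(a) `τ` is not tail-preserving;
(b) the set `{x ∈ ℓ¹(τ) : (∑_{j=n+1}^∞ x_j)ₙ ∈ ℓ¹(τ)}` is meagre in `ℓ¹(τ)`;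
(c) there is a sequence `(x⁽ᵏ⁾)` of finitely supported sequences with non-negative real
terms such that `‖x⁽ᵏ⁾‖_τ ≤ 1` for all `k` and `∑ₙ τₙ |∑_{j>n} x_j⁽ᵏ⁾| → ∞`. -/
theorem stmt13 (τ : ℕ → ℝ) (hτ : ∀ n, 1 ≤ τ n) :
    (¬ TailPreserving τ ↔
      @IsMeagre (L1tau τ) (l1tauMetric τ hτ).toUniformSpace.toTopologicalSpace
        {x : L1tau τ | Summable fun n => τ n * ‖tailFrom x.1 n‖})
    ∧
    (¬ TailPreserving τ ↔
      ∃ x : ℕ → ℕ → ℂ,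
        (∀ k, (Function.support (x k)).Finite) ∧
        (∀ k j, 0 ≤ (x k j).re ∧ (x k j).im = 0) ∧
        (∀ k, ∑' n, τ n * ‖x k n‖ ≤ 1) ∧
        Tendsto (fun k => ∑' n, τ n * ‖tailFrom (x k) n‖) atTop atTop) := by
  constructor
  · constructor
    · intro h
      exact aux_c_imp_meagre τ hτ (aux_not_tp_imp_c τ hτ h)
    · intro hme htp
      exact aux_tp_imp_not_meagre τ hτ htp hme
  · constructor
    · exact aux_not_tp_imp_c τ hτ
    · intro hc htp
      exact aux_tp_imp_not_meagre τ hτ htp (aux_c_imp_meagre τ hτ hc)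
end
end

section
/- Let ρ > 1. Then there exists a sequence (τₙ) of real numbers with τₙ ∈ [1, ∞) and ρⁿ ≤ τₙ for all n ∈ ℕ, such that (τₙ) is not tail-preserving. -/
noncomputable section

lemma aux_summable_bound : Summable (fun n : ℕ => 4 * (((n : ℝ) + 1) ^ 2)⁻¹) := by
  have h : Summable (fun n : ℕ => 4 * (((n : ℝ)) ^ 2)⁻¹) := by
    have := Real.summable_one_div_nat_pow.mpr (by norm_num : 1 < 2)
    simpa [one_div] using this.mul_left 4
  have := (summable_nat_add_iff 1).mpr h
  simpa [add_comm] using this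

lemma aux_half_le (n : ℕ) : ((n : ℝ) + 1) / 2 ≤ ((n / 2 + 1 : ℕ) : ℝ) := by
  have h : n + 1 ≤ 2 * (n / 2 + 1) := by omega
  have h2 : ((n : ℝ) + 1) ≤ 2 * ((n / 2 + 1 : ℕ) : ℝ) := by exact_mod_cast h
  linarith

/-- Lemma 5.3(ii): for every `ρ > 1` there is a sequence `(τₙ) ⊂ [1,∞)` with `ρⁿ ≤ τₙ`
for all `n ∈ ℕ = {1,2,…}` which is not tail-preserving.  (0-indexed: `τ n` is the paper's
`τ_{n+1}`, so the growth condition reads `ρ^(n+1) ≤ τ n`.) -/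
theorem stmt15 (ρ : ℝ) (hρ : 1 < ρ) :
    ∃ τ : ℕ → ℝ, (∀ n, 1 ≤ τ n) ∧ (∀ n : ℕ, ρ ^ (n + 1) ≤ τ n) ∧ ¬ TailPreserving τ := by
  have hρ0 : 0 < ρ := lt_trans one_pos hρ
  have hρ1 : ∀ m : ℕ, 1 ≤ ρ ^ m := fun m => one_le_pow₀ hρ.le
  set τ : ℕ → ℝ := fun n =>
    if Even n then ((n / 2 + 1 : ℕ) : ℝ) ^ 2 * ρ ^ (n + 2) else ρ ^ (n + 1) with hτdef
  set x' : ℕ → ℝ := fun n =>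
    if Odd n then (((n / 2 + 1 : ℕ) : ℝ) ^ 2 * ρ ^ (n + 1))⁻¹ else 0 with hx'def
  have hcpos : ∀ n : ℕ, (0 : ℝ) < ((n / 2 + 1 : ℕ) : ℝ) := fun n => by positivity
  have hx'nonneg : ∀ n, 0 ≤ x' n := by
    intro n
    simp only [hx'def]
    split <;> positivity
  -- bound : x' n ≤ 4/(n+1)^2 and τ n * x' n ≤ 4/(n+1)^2
  have hsqbound : ∀ n : ℕ, ((((n / 2 + 1 : ℕ) : ℝ)) ^ 2)⁻¹ ≤ 4 * (((n : ℝ) + 1) ^ 2)⁻¹ := by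
    intro n
    have h1 := aux_half_le n
    have h2 : (((n : ℝ) + 1) / 2) ^ 2 ≤ (((n / 2 + 1 : ℕ) : ℝ)) ^ 2 := by
      apply pow_le_pow_left₀ (by positivity) h1
    have h3 : (((n / 2 + 1 : ℕ) : ℝ) ^ 2)⁻¹ ≤ ((((n : ℝ) + 1) / 2) ^ 2)⁻¹ := by
      apply inv_anti₀ (by positivity) h2
    have h4 : ((((n : ℝ) + 1) / 2) ^ 2)⁻¹ = 4 * (((n : ℝ) + 1) ^ 2)⁻¹ := by
      field_simp; ring
    linarith
  have hx'sum : Summable x' := by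
    apply Summable.of_nonneg_of_le hx'nonneg _ aux_summable_bound
    intro n
    simp only [hx'def]
    split
    · have h1 : (((n / 2 + 1 : ℕ) : ℝ) ^ 2 * ρ ^ (n + 1))⁻¹ ≤ ((((n / 2 + 1 : ℕ) : ℝ)) ^ 2)⁻¹ := by
        rw [mul_inv]
        have := hcpos n
        calc (((n / 2 + 1 : ℕ) : ℝ) ^ 2)⁻¹ * (ρ ^ (n + 1))⁻¹
            ≤ (((n / 2 + 1 : ℕ) : ℝ) ^ 2)⁻¹ * 1 := by
              apply mul_le_mul_of_nonneg_left _ (by positivity)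
              exact inv_le_one_of_one_le₀ (hρ1 _)
          _ = (((n / 2 + 1 : ℕ) : ℝ) ^ 2)⁻¹ := mul_one _
      exact h1.trans (hsqbound n)
    · positivity
  refine ⟨τ, ?_, ?_, ?_⟩
  · intro n
    simp only [hτdef]
    split
    · have h1 := hcpos n
      have h2 : (1 : ℝ) ≤ ((n / 2 + 1 : ℕ) : ℝ) := by exact_mod_cast Nat.one_le_iff_ne_zero.mpr (by omega)
      have h3 : (1 : ℝ) ≤ ((n / 2 + 1 : ℕ) : ℝ) ^ 2 := one_le_pow₀ h2
      nlinarith [hρ1 (n + 2)]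
    · exact hρ1 (n + 1)
  · intro n
    simp only [hτdef]
    split
    · have h2 : (1 : ℝ) ≤ ((n / 2 + 1 : ℕ) : ℝ) ^ 2 := by
        apply one_le_pow₀
        exact_mod_cast Nat.one_le_iff_ne_zero.mpr (by omega)
      have h3 : ρ ^ (n + 1) ≤ ρ ^ (n + 2) := pow_le_pow_right₀ hρ.le (by omega)
      nlinarith [pow_pos hρ0 (n + 2)]
    · exact le_refl _
  · intro hTP
    set x : ℕ → ℂ := fun n => (x' n : ℂ) with hxdef
    have hnorm : ∀ n, ‖x n‖ = x' n := by
      intro n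
      simp [hxdef, Complex.norm_real, abs_of_nonneg (hx'nonneg n)]
    have hwsum : Summable (fun n => τ n * ‖x n‖) := by
      apply Summable.of_nonneg_of_le (fun n => by
        have := hx'nonneg n
        rw [hnorm n]
        simp only [hτdef]
        split <;> positivity) _ aux_summable_bound
      intro n
      rw [hnorm n]
      simp only [hτdef, hx'def]
      rcases Nat.even_or_odd n with he | ho
      · rw [if_pos he, if_neg (by simpa using he)]
        simp only [mul_zero]
        positivity
      · rw [if_neg (by simpa [Nat.even_iff, Nat.odd_iff] using ho), if_pos ho]
        rw [mul_inv]
        have hp : (0 : ℝ) < ρ ^ (n + 1) := pow_pos hρ0 _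
        have : ρ ^ (n + 1) * ((((n / 2 + 1 : ℕ) : ℝ) ^ 2)⁻¹ * (ρ ^ (n + 1))⁻¹)
            = (((n / 2 + 1 : ℕ) : ℝ) ^ 2)⁻¹ := by
          field_simp
        rw [this]
        exact hsqbound n
    have hsum2 := hTP x hwsum
    -- every term at even index 2N is ≥ 1, contradiction with tendsto 0
    have hlb : ∀ N : ℕ, (1 : ℝ) ≤ τ (2 * N) * ‖tailFrom x (2 * N)‖ := by
      intro N
      have htail : tailFrom x (2 * N) = ((∑' j : ℕ, x' (2 * N + 1 + j) : ℝ) : ℂ) := by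
        rw [tailFrom, Complex.ofReal_tsum]
      have hsumshift : Summable (fun j : ℕ => x' (2 * N + 1 + j)) :=
        hx'sum.comp_injective (add_right_injective (2 * N + 1))
      have htsum_nonneg : 0 ≤ ∑' j : ℕ, x' (2 * N + 1 + j) :=
        tsum_nonneg (fun j => hx'nonneg _)
      have hge : x' (2 * N + 1) ≤ ∑' j : ℕ, x' (2 * N + 1 + j) := by
        have := Summable.le_tsum hsumshift 0 (fun i _ => hx'nonneg _)
        simpa using this
      have hnormtail : ‖tailFrom x (2 * N)‖ = ∑' j : ℕ, x' (2 * N + 1 + j) := by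
        rw [htail, Complex.norm_real, Real.norm_eq_abs, abs_of_nonneg htsum_nonneg]
      have hx'val : x' (2 * N + 1) = (((N + 1 : ℕ) : ℝ) ^ 2 * ρ ^ (2 * N + 2))⁻¹ := by
        simp only [hx'def]
        rw [if_pos ⟨N, by ring⟩]
        have h : (2 * N + 1) / 2 = N := by omega
        rw [h]
      have hτval : τ (2 * N) = ((N + 1 : ℕ) : ℝ) ^ 2 * ρ ^ (2 * N + 2) := by
        simp only [hτdef]
        rw [if_pos ⟨N, by ring⟩]
        have h : (2 * N) / 2 = N := by omega
        rw [h]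
      have hpos : (0 : ℝ) < ((N + 1 : ℕ) : ℝ) ^ 2 * ρ ^ (2 * N + 2) := by positivity
      calc (1 : ℝ) = τ (2 * N) * x' (2 * N + 1) := by
            rw [hτval, hx'val, mul_inv_cancel₀ (ne_of_gt hpos)]
        _ ≤ τ (2 * N) * ‖tailFrom x (2 * N)‖ := by
            rw [hnormtail]
            apply mul_le_mul_of_nonneg_left hge
            rw [hτval]; positivity
    have htend := hsum2.tendsto_atTop_zero
    have hev : ∀ᶠ n in Filter.atTop, τ n * ‖tailFrom x n‖ < 1 :=
      htend.eventually (gt_mem_nhds one_pos)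
    obtain ⟨N, hN⟩ := Filter.eventually_atTop.mp hev
    exact absurd (hlb N) (not_le.mpr (hN (2 * N) (by omega)))
end
end

section
/- Let ρ > 1. Then there exists a weight ω = (ωₙ) on ℤ⁺ satisfying lim_{n→∞} ωₙ^{1/n} = ρ, together with a strictly increasing sequence (n_k) of natural numbers such that ω_{n_k + 1} / ω_{n_k} ≤ (ρ + 1)/k for every k ∈ ℕ. -/
noncomputable section

open Filter

/-- A weight on the additive monoid `ℤ⁺ = ℕ`: a function `ω : ℕ → [1,∞)` with `ω 0 = 1`
which is submultiplicative. -/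
def IsWeightNat (ω : ℕ → ℝ) : Prop :=
  (∀ n, 1 ≤ ω n) ∧ ω 0 = 1 ∧ ∀ m n, ω (m + n) ≤ ω m * ω n

namespace L74

noncomputable def al (j : ℕ) : ℝ := (2⁻¹ : ℝ) ^ (j + 1)

def Mf (c k : ℕ) : ℕ := 3 + 2 ^ (k + 3) * (c + 2 + k)

noncomputable def be (ρ : ℝ) (k : ℕ) : ℝ := 1 + ρ + Real.log (k + 1)

noncomputable def tent (ρ : ℝ) (j n : ℕ) : ℝ :=
  max 0 (min (al j * n) (be ρ j * ((Mf ⌈ρ⌉₊ j : ℝ) - n)))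

noncomputable def hh (ρ : ℝ) (n : ℕ) : ℝ := ∑' j, tent ρ j n

lemma al_pos (j : ℕ) : 0 < al j := by unfold al; positivity

lemma tent_nonneg (ρ : ℝ) (j n : ℕ) : 0 ≤ tent ρ j n := le_max_left _ _

lemma tent_le (ρ : ℝ) (j n : ℕ) : tent ρ j n ≤ al j * n := by
  have h0 : (0:ℝ) ≤ al j * n := mul_nonneg (al_pos j).le (Nat.cast_nonneg n)
  exact max_le h0 (min_le_left _ _)

lemma summable_al : Summable al := by
  refine ((summable_geometric_of_lt_one (by norm_num : (0:ℝ) ≤ 2⁻¹) (by norm_num)).mul_right 2⁻¹).congr fun j => ?_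
  rw [al, pow_succ]

lemma tsum_al : ∑' j, al j = 1 := by
  calc ∑' j, al j = ∑' j, (2⁻¹:ℝ)^j * 2⁻¹ := by simp [al, pow_succ]
    _ = (∑' j, (2⁻¹:ℝ)^j) * 2⁻¹ := tsum_mul_right
    _ = 1 := by rw [tsum_geometric_of_lt_one (by norm_num) (by norm_num)]; norm_num

lemma summable_tent (ρ : ℝ) (n : ℕ) : Summable (fun j => tent ρ j n) :=
  Summable.of_nonneg_of_le (fun j => tent_nonneg ρ j n) (fun j => tent_le ρ j n)
    (summable_al.mul_right (n:ℝ))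

lemma be_nonneg {ρ : ℝ} (hρ : 1 < ρ) (k : ℕ) : 0 ≤ be ρ k := by
  have : 0 ≤ Real.log (k+1) := Real.log_nonneg (by linarith [Nat.cast_nonneg (α := ℝ) k])
  unfold be; linarith


/-- asymmetric clamped tent is subadditive -/
lemma key_subadd (A B M a b : ℝ) (hA : 0 ≤ A) (hB : 0 ≤ B) (ha : 0 ≤ a) (hb : 0 ≤ b) :
    max 0 (min (A*(a+b)) (B*(M-(a+b)))) ≤
      max 0 (min (A*a) (B*(M-a))) + max 0 (min (A*b) (B*(M-b))) := by
  rcases le_or_gt (A*a) (B*(M-a)) with h1 | h1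
  · rcases le_or_gt (A*b) (B*(M-b)) with h2 | h2
    · have ta : A*a ≤ max 0 (min (A*a) (B*(M-a))) := by
        rw [min_eq_left h1]; exact le_max_right _ _
      have tb : A*b ≤ max 0 (min (A*b) (B*(M-b))) := by
        rw [min_eq_left h2]; exact le_max_right _ _
      have hL : max 0 (min (A*(a+b)) (B*(M-(a+b)))) ≤ A*(a+b) :=
        max_le (by positivity) (min_le_left _ _)
      nlinarith
    · have hBB : B*(M-(a+b)) ≤ B*(M-b) := by nlinarith
      have hL : max 0 (min (A*(a+b)) (B*(M-(a+b)))) ≤ max 0 (min (A*b) (B*(M-b))) := by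
        rw [min_eq_right h2.le]
        exact max_le (le_max_left _ _) (le_trans (le_trans (min_le_right _ _) hBB) (le_max_right _ _))
      have := le_max_left (0:ℝ) (min (A*a) (B*(M-a)))
      linarith
  · have hBB : B*(M-(a+b)) ≤ B*(M-a) := by nlinarith
    have hL : max 0 (min (A*(a+b)) (B*(M-(a+b)))) ≤ max 0 (min (A*a) (B*(M-a))) := by
      rw [min_eq_right h1.le]
      exact max_le (le_max_left _ _) (le_trans (le_trans (min_le_right _ _) hBB) (le_max_right _ _))
    have := le_max_left (0:ℝ) (min (A*b) (B*(M-b)))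
    linarith

/-- one-step increment bound -/
lemma key_step (A B M x : ℝ) (hA : 0 ≤ A) (hB : 0 ≤ B) :
    max 0 (min (A*(x+1)) (B*(M-(x+1)))) ≤ max 0 (min (A*x) (B*(M-x))) + A := by
  have hmin : min (A*(x+1)) (B*(M-(x+1))) ≤ min (A*x) (B*(M-x)) + A := by
    rcases le_total (A*x) (B*(M-x)) with h | h
    · rw [min_eq_left h]
      have := min_le_left (A*(x+1)) (B*(M-(x+1)))
      nlinarith
    · rw [min_eq_right h]
      have := min_le_right (A*(x+1)) (B*(M-(x+1)))
      nlinarith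
  have h0 : (0:ℝ) ≤ max 0 (min (A*x) (B*(M-x))) + A := by
    have := le_max_left (0:ℝ) (min (A*x) (B*(M-x))); linarith
  exact max_le h0 (le_trans hmin (add_le_add_left (le_max_right _ _) A))


lemma tent_subadd {ρ : ℝ} (hρ : 1 < ρ) (j a b : ℕ) :
    tent ρ j (a + b) ≤ tent ρ j a + tent ρ j b := by
  have h := key_subadd (al j) (be ρ j) ((Mf ⌈ρ⌉₊ j : ℕ) : ℝ) a b (al_pos j).le
    (be_nonneg hρ j) (Nat.cast_nonneg a) (Nat.cast_nonneg b)
  unfold tent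
  push_cast
  exact h

lemma tent_step {ρ : ℝ} (hρ : 1 < ρ) (j n : ℕ) :
    tent ρ j (n + 1) ≤ tent ρ j n + al j := by
  have h := key_step (al j) (be ρ j) ((Mf ⌈ρ⌉₊ j : ℕ) : ℝ) n (al_pos j).le (be_nonneg hρ j)
  unfold tent
  push_cast
  exact h

lemma tent_eq_zero {ρ : ℝ} (hρ : 1 < ρ) {j n : ℕ} (h : Mf ⌈ρ⌉₊ j ≤ n) :
    tent ρ j n = 0 := by
  have h1 : be ρ j * ((Mf ⌈ρ⌉₊ j : ℝ) - n) ≤ 0 :=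
    mul_nonpos_of_nonneg_of_nonpos (be_nonneg hρ j)
      (by have : ((Mf ⌈ρ⌉₊ j : ℕ) : ℝ) ≤ (n:ℝ) := Nat.cast_le.mpr h; linarith)
  unfold tent
  exact max_eq_left (le_trans (min_le_right _ _) h1)

lemma Mf_mono (c : ℕ) : Monotone (Mf c) := by
  intro j k hjk
  unfold Mf
  have h1 : (2:ℕ)^(j+3) ≤ 2^(k+3) := Nat.pow_le_pow_right (by norm_num) (by omega)
  have h2 : c + 2 + j ≤ c + 2 + k := by omega
  exact Nat.add_le_add_left (Nat.mul_le_mul h1 h2) 3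

lemma hh_nonneg (ρ : ℝ) (n : ℕ) : 0 ≤ hh ρ n :=
  tsum_nonneg fun j => tent_nonneg ρ j n

lemma hh_zero (ρ : ℝ) : hh ρ 0 = 0 := by
  unfold hh
  have : ∀ j, tent ρ j 0 = 0 := fun j =>
    le_antisymm (by simpa using tent_le ρ j 0) (tent_nonneg ρ j 0)
  simp [this]

lemma hh_subadd {ρ : ℝ} (hρ : 1 < ρ) (m n : ℕ) : hh ρ (m + n) ≤ hh ρ m + hh ρ n := by
  unfold hh
  calc ∑' j, tent ρ j (m+n) ≤ ∑' j, (tent ρ j m + tent ρ j n) :=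
        Summable.tsum_le_tsum (fun j => tent_subadd hρ j m n) (summable_tent ρ (m+n))
          ((summable_tent ρ m).add (summable_tent ρ n))
    _ = ∑' j, tent ρ j m + ∑' j, tent ρ j n := Summable.tsum_add (summable_tent ρ m) (summable_tent ρ n)

lemma hh_tail {ρ : ℝ} (hρ : 1 < ρ) (J n : ℕ) (hn : Mf ⌈ρ⌉₊ J ≤ n) :
    hh ρ n ≤ (2⁻¹:ℝ)^J * n := by
  have hsum := summable_tent ρ n
  have hsplit := Summable.sum_add_tsum_nat_add J hsum
  have hzero : ∑ j ∈ Finset.range J, tent ρ j n = 0 := by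
    apply Finset.sum_eq_zero
    intro j hj
    exact tent_eq_zero hρ (le_trans (Mf_mono _ (Finset.mem_range.mp hj).le) hn)
  have hb : ∀ i, tent ρ (i + J) n ≤ al i * ((2⁻¹:ℝ)^J * (n:ℝ)) := by
    intro i
    have h1 := tent_le ρ (i + J) n
    have h2 : al (i + J) * (n:ℝ) = al i * ((2⁻¹:ℝ)^J * (n:ℝ)) := by
      unfold al
      rw [show i + J + 1 = (i + 1) + J by ring, pow_add]
      ring
    linarith [h1, h2.le]
  have hsumJ : Summable (fun i => tent ρ (i + J) n) :=
    Summable.of_nonneg_of_le (fun i => tent_nonneg ρ (i + J) n) hb (summable_al.mul_right _)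
  have htail : ∑' i, tent ρ (i + J) n ≤ ∑' i, al i * ((2⁻¹:ℝ)^J * (n:ℝ)) :=
    Summable.tsum_le_tsum hb hsumJ (summable_al.mul_right _)
  have hts : ∑' i, al i * ((2⁻¹:ℝ)^J * (n:ℝ)) = (2⁻¹:ℝ)^J * n := by
    rw [tsum_mul_right, tsum_al, one_mul]
  unfold hh
  rw [← hsplit, hzero, zero_add]
  rw [hts] at htail
  exact htail


lemma cast_Mf (c k : ℕ) : ((Mf c k : ℕ) : ℝ) = 3 + 2^(k+3) * ((c:ℝ) + 2 + k) := by
  unfold Mf; push_cast; ring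

lemma al_key (k : ℕ) : al k * (2:ℝ)^(k+3) = 4 := by
  unfold al
  rw [show (2:ℝ)^(k+3) = 2^(k+1) * 4 by rw [pow_add, pow_add]; ring, ← mul_assoc, ← mul_pow]
  norm_num

lemma slope_big {ρ : ℝ} (hρ : 1 < ρ) (k : ℕ) :
    2 * be ρ k ≤ al k * (((Mf ⌈ρ⌉₊ k : ℕ) : ℝ) - 2) := by
  set c := ⌈ρ⌉₊
  have hc : ρ ≤ (c:ℝ) := Nat.le_ceil ρ
  have hlog : Real.log ((k:ℝ) + 1) ≤ k := by
    have := Real.log_le_sub_one_of_pos (show (0:ℝ) < (k:ℝ)+1 by positivity)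
    linarith
  have hm : ((Mf c k : ℕ) : ℝ) - 2 = 1 + 2^(k+3) * ((c:ℝ) + 2 + k) := by
    rw [cast_Mf]; ring
  have h4 := al_key k
  have hal := (al_pos k).le
  have hk : (0:ℝ) ≤ k := Nat.cast_nonneg k
  have expand : al k * (((Mf c k : ℕ) : ℝ) - 2) = al k + 4 * ((c:ℝ) + 2 + k) := by
    rw [hm]; nlinarith [h4]
  rw [expand]
  unfold be
  push_cast
  nlinarith [hc, hlog, hal, hk]

lemma tent_at_drop {ρ : ℝ} (hρ : 1 < ρ) (k : ℕ) :
    tent ρ k (Mf ⌈ρ⌉₊ k - 2) = 2 * be ρ k ∧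
      tent ρ k ((Mf ⌈ρ⌉₊ k - 2) + 1) = be ρ k := by
  set c := ⌈ρ⌉₊ with hcdef
  have h3 : 3 ≤ Mf c k := Nat.le_add_right 3 _
  have ha : ((Mf c k - 2 : ℕ) : ℝ) = ((Mf c k : ℕ) : ℝ) - 2 := by
    push_cast [Nat.cast_sub (by omega : 2 ≤ Mf c k)]; ring
  have hb : (((Mf c k - 2) + 1 : ℕ) : ℝ) = ((Mf c k : ℕ) : ℝ) - 1 := by
    push_cast [Nat.cast_sub (by omega : 2 ≤ Mf c k)]; ring
  have hbe := be_nonneg hρ k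
  have hslope := slope_big hρ k
  have hal := (al_pos k).le
  constructor
  · unfold tent
    rw [← hcdef, ha, show ((Mf c k : ℕ) : ℝ) - (((Mf c k : ℕ) : ℝ) - 2) = 2 by ring]
    rw [min_eq_right (by nlinarith), max_eq_right (by nlinarith)]
    ring
  · unfold tent
    rw [← hcdef, hb, show ((Mf c k : ℕ) : ℝ) - (((Mf c k : ℕ) : ℝ) - 1) = 1 by ring]
    rw [min_eq_right (by nlinarith), max_eq_right (by nlinarith)]
    ring

lemma hh_drop {ρ : ℝ} (hρ : 1 < ρ) (k : ℕ) :
    hh ρ ((Mf ⌈ρ⌉₊ k - 2) + 1) ≤ hh ρ (Mf ⌈ρ⌉₊ k - 2) + 1 - be ρ k := by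
  set a := Mf ⌈ρ⌉₊ k - 2 with hadef
  obtain ⟨hta, htb⟩ := tent_at_drop hρ k
  have hs1 := summable_tent ρ a
  have hs2 := summable_tent ρ (a + 1)
  have hite1 : Summable (fun j => if j = k then 0 else tent ρ j a) := by
    apply Summable.of_nonneg_of_le _ _ hs1
    · intro j; by_cases h : j = k <;> simp [h, tent_nonneg]
    · intro j; by_cases h : j = k <;> simp [h, tent_nonneg]
  have hite2 : Summable (fun j => if j = k then 0 else tent ρ j (a + 1)) := by
    apply Summable.of_nonneg_of_le _ _ hs2
    · intro j; by_cases h : j = k <;> simp [h, tent_nonneg]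
    · intro j; by_cases h : j = k <;> simp [h, tent_nonneg]
  have e2 : hh ρ (a + 1) = tent ρ k (a + 1) + ∑' j, if j = k then 0 else tent ρ j (a + 1) :=
    Summable.tsum_eq_add_tsum_ite hs2 k
  have e1 : hh ρ a = tent ρ k a + ∑' j, if j = k then 0 else tent ρ j a :=
    Summable.tsum_eq_add_tsum_ite hs1 k
  have hpt : ∀ j, (if j = k then 0 else tent ρ j (a + 1)) ≤
      (if j = k then 0 else tent ρ j a) + al j := by
    intro j
    by_cases h : j = k
    · rw [if_pos h, if_pos h]
      linarith [al_pos j]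
    · rw [if_neg h, if_neg h]
      exact tent_step hρ j a
  have hS : (∑' j, if j = k then 0 else tent ρ j (a + 1)) ≤
      (∑' j, if j = k then 0 else tent ρ j a) + 1 := by
    calc (∑' j, if j = k then 0 else tent ρ j (a + 1))
        ≤ ∑' j, ((if j = k then 0 else tent ρ j a) + al j) :=
          Summable.tsum_le_tsum hpt hite2 (hite1.add summable_al)
      _ = (∑' j, if j = k then 0 else tent ρ j a) + ∑' j, al j :=
          Summable.tsum_add hite1 summable_al
      _ = (∑' j, if j = k then 0 else tent ρ j a) + 1 := by rw [tsum_al]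
  rw [e1, e2, hta, htb] at *
  linarith [hS]
end L74

open L74


/-- Lemma 7.4: for every `ρ > 1` there is a weight `ω` on `ℤ⁺` with
`lim_{n→∞} ωₙ^{1/n} = ρ` and a strictly increasing sequence `(n_k)` of natural numbers with
`ω_{n_k + 1} / ω_{n_k} ≤ (ρ+1)/k` for all `k ∈ ℕ = {1,2,…}` (0-indexed below: `nk k` is the
paper's `n_{k+1}`). -/
theorem stmt16 (ρ : ℝ) (hρ : 1 < ρ) :
    ∃ ω : ℕ → ℝ, IsWeightNat ω ∧
      Tendsto (fun n : ℕ => ω n ^ ((1 : ℝ) / n)) atTop (nhds ρ) ∧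
      ∃ nk : ℕ → ℕ, StrictMono nk ∧
        ∀ k : ℕ, ω (nk k + 1) / ω (nk k) ≤ (ρ + 1) / (k + 1) := by
  have hρ0 : (0:ℝ) < ρ := by linarith
  refine ⟨fun n => ρ^n * Real.exp (hh ρ n), ⟨?_, ?_, ?_⟩, ?_, fun k => Mf ⌈ρ⌉₊ k - 2, ?_, ?_⟩
  · -- 1 ≤ ω n
    intro n
    have hp : (1:ℝ) ≤ ρ^n := one_le_pow₀ hρ.le
    have he : 1 ≤ Real.exp (hh ρ n) := Real.one_le_exp (hh_nonneg ρ n)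
    show (1:ℝ) ≤ ρ^n * Real.exp (hh ρ n)
    nlinarith
  · -- ω 0 = 1
    simp [hh_zero]
  · -- submultiplicative
    intro m n
    have h := hh_subadd hρ m n
    calc ρ^(m+n) * Real.exp (hh ρ (m+n))
        ≤ ρ^(m+n) * Real.exp (hh ρ m + hh ρ n) := by
          exact mul_le_mul_of_nonneg_left (Real.exp_le_exp.mpr h) (by positivity)
      _ = (ρ^m * Real.exp (hh ρ m)) * (ρ^n * Real.exp (hh ρ n)) := by
          rw [pow_add, Real.exp_add]; ring
  · -- tendsto
    have hlim0 : Tendsto (fun n : ℕ => hh ρ n / n) atTop (nhds 0) := by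
      rw [Metric.tendsto_atTop]
      intro ε hε
      obtain ⟨J, hJ⟩ := exists_pow_lt_of_lt_one hε (by norm_num : (2⁻¹:ℝ) < 1)
      refine ⟨max (Mf ⌈ρ⌉₊ J) 1, fun n hn => ?_⟩
      have hn1 : 1 ≤ n := le_trans (le_max_right _ _) hn
      have hnM : Mf ⌈ρ⌉₊ J ≤ n := le_trans (le_max_left _ _) hn
      have h1 := hh_tail hρ J n hnM
      have hnpos : (0:ℝ) < n := by exact_mod_cast Nat.cast_pos.mpr hn1
      have hnn : 0 ≤ hh ρ n / n := div_nonneg (hh_nonneg ρ n) hnpos.le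
      rw [Real.dist_eq, sub_zero, abs_of_nonneg hnn]
      calc hh ρ n / n ≤ (2⁻¹:ℝ)^J := by rw [div_le_iff₀ hnpos]; exact h1
        _ < ε := hJ
    have hexp : Tendsto (fun n : ℕ => Real.exp (Real.log ρ + hh ρ n / n)) atTop (nhds ρ) := by
      have h := (Real.continuous_exp.tendsto (Real.log ρ + 0)).comp
        (tendsto_const_nhds.add hlim0)
      simpa [Function.comp_def, Real.exp_log hρ0] using h
    apply hexp.congr'
    filter_upwards [eventually_ge_atTop 1] with n hn
    have hωpos : (0:ℝ) < ρ^n * Real.exp (hh ρ n) := by positivity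
    have hn0 : (n:ℝ) ≠ 0 := Nat.cast_ne_zero.mpr (by omega)
    rw [Real.rpow_def_of_pos hωpos, Real.log_mul (by positivity) (Real.exp_ne_zero _),
      Real.log_pow, Real.log_exp]
    congr 1
    field_simp
  · -- strict mono
    apply strictMono_nat_of_lt_succ
    intro k
    have hp : 0 < (2:ℕ)^(k+3) := pow_pos (by norm_num) _
    have e : (2:ℕ)^(k+1+3) = 2 * 2^(k+3) := by
      rw [show k+1+3 = (k+3)+1 from rfl, pow_succ]; ring
    have hM : Mf ⌈ρ⌉₊ k < Mf ⌈ρ⌉₊ (k+1) := by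
      unfold Mf
      have : 2^(k+3) * (⌈ρ⌉₊ + 2 + k) < 2^(k+1+3) * (⌈ρ⌉₊ + 2 + (k+1)) := by nlinarith
      omega
    have h3 : 3 ≤ Mf ⌈ρ⌉₊ k := Nat.le_add_right 3 _
    omega
  · -- ratio bound
    intro k
    set a := Mf ⌈ρ⌉₊ k - 2 with hadef
    have hd := hh_drop hρ k
    rw [← hadef] at hd
    have hrat : ρ^(a+1) * Real.exp (hh ρ (a+1)) / (ρ^a * Real.exp (hh ρ a))
        = ρ * Real.exp (hh ρ (a+1) - hh ρ a) := by
      rw [Real.exp_sub, pow_succ]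
      have h1 : (ρ:ℝ)^a ≠ 0 := by positivity
      have h2 : Real.exp (hh ρ a) ≠ 0 := Real.exp_ne_zero _
      field_simp
    have h1 : Real.exp (hh ρ (a+1) - hh ρ a) ≤ Real.exp (1 - be ρ k) :=
      Real.exp_le_exp.mpr (by linarith)
    have h2 : Real.exp (1 - be ρ k) = Real.exp (-ρ) * ((k:ℝ)+1)⁻¹ := by
      rw [show (1:ℝ) - be ρ k = -ρ + -(Real.log ((k:ℝ)+1)) by unfold be; ring,
        Real.exp_add, Real.exp_neg (Real.log _), Real.exp_log (by positivity : (0:ℝ) < (k:ℝ)+1)]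
    have he : Real.exp (-ρ) ≤ 1 := by
      rw [← Real.exp_zero]; exact Real.exp_le_exp.mpr (by linarith)
    have hkinv : (0:ℝ) ≤ ((k:ℝ)+1)⁻¹ := by positivity
    have h3 : ρ * (Real.exp (-ρ) * ((k:ℝ)+1)⁻¹) ≤ (ρ+1)/((k:ℝ)+1) := by
      rw [div_eq_mul_inv]
      have hkey : ρ * Real.exp (-ρ) ≤ ρ + 1 := by nlinarith [Real.exp_pos (-ρ)]
      calc ρ * (Real.exp (-ρ) * ((k:ℝ)+1)⁻¹) = (ρ * Real.exp (-ρ)) * ((k:ℝ)+1)⁻¹ := by ring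
        _ ≤ (ρ+1) * ((k:ℝ)+1)⁻¹ := mul_le_mul_of_nonneg_right hkey hkinv
    calc ρ^(a+1) * Real.exp (hh ρ (a+1)) / (ρ^a * Real.exp (hh ρ a))
        = ρ * Real.exp (hh ρ (a+1) - hh ρ a) := hrat
      _ ≤ ρ * Real.exp (1 - be ρ k) := mul_le_mul_of_nonneg_left h1 hρ0.le
      _ = ρ * (Real.exp (-ρ) * ((k:ℝ)+1)⁻¹) := by rw [h2]
      _ ≤ (ρ+1)/((k:ℝ)+1) := h3
end
end
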